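/- arXiv:2302.06878 — 8 statements merged into one kernel-verified Lean document; each statement's English description precedes it below -/
import Mathlib

section
/- Let H be a finite simple graph on n vertices with maximum degree at most Δ, where 8 ≤ Δ ≤ n, and set t := log n / log Δ (so Δ^t = n). Let s ≥ 1 be an integer and c ≥ 8 a real number. Let B be a random subset of the vertex set of H such that for every 5-independent vertex set U of H, P(U ⊆ B) ≤ Δ^{−(s+c)·|U|}. Then: (P1) the probability that there exists a vertex set U ⊆ B that is 5-independent in H, (s+8)-connected in H, and satisfies |U| ≥ t is at most n^{11−c}; and (P2) the probability that there exists an s-connected vertex set C ⊆ B with |C| ≥ t·(1+Δ+Δ²+Δ³+Δ⁴) is at most n^{11−c}. -/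
open scoped ENNReal
open MeasureTheory
open scoped ProbabilityTheory

/-- `sdist G A B` is the minimum shortest-path distance (in `ℕ∞`) between the
vertex sets `A` and `B` in the graph `G`. -/
noncomputable def sdist {V : Type*} (G : SimpleGraph V) (A B : Set V) : ℕ∞ :=
  ⨅ a ∈ A, ⨅ b ∈ B, G.edist a b

/-- A vertex set `S` is `s`-connected in `G` if every nonempty proper subset `S' ⊊ S`
satisfies `dist_G(S', S \ S') ≤ s`. -/
def sConnected {V : Type*} (G : SimpleGraph V) (s : ℕ) (S : Set V) : Prop :=
  ∀ S' ⊆ S, S'.Nonempty → S' ≠ S → sdist G S' (S \ S') ≤ (s : ℕ∞)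

/-- A vertex set `S` is `α`-independent in `G` if any two distinct vertices of `S`
are at distance at least `α` in `G`. -/
def Indep {V : Type*} (G : SimpleGraph V) (α : ℕ) (S : Set V) : Prop :=
  ∀ u ∈ S, ∀ v ∈ S, u ≠ v → (α : ℕ∞) ≤ G.edist u v

/-!
(P2) reduces to (P1): a maximal 5-independent subset `U` of an `s`-connected set `C` covers `C`
by balls of radius 4, each of size at most `1 + Δ + ⋯ + Δ⁴`, and it is `(s + 8)`-connected.

For (P1), an `(s + 8)`-connected set `U` is connected in the graph joining vertices at distance
at most `s + 8`, whose closed neighbourhoods have at most `D = 2Δ^(s+8)` vertices, so it contains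
a connected subset of size `k = ⌈t⌉`. A depth-first search encodes a connected `k`-set through a fixed vertex by its
`2k` push/pop steps and the `k - 1` indices of the pushed neighbours, so there are at most
`n 4^k D^(k-1) ≤ n Δ^(k + (s+8)(k-1))` connected `k`-sets. A union bound over the `5`-independent
ones gives `n Δ^((9-c)k - s - 8) ≤ n^(11-c)`.
-/

open Finset

theorem List.eq_of_map_isSome_eq_of_reduceOption_eq {α : Type*} :
    ∀ {l₁ l₂ : List (Option α)}, l₁.map Option.isSome = l₂.map Option.isSome →
      l₁.reduceOption = l₂.reduceOption → l₁ = l₂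
  | [], [], _, _ => rfl
  | none :: l₁, none :: l₂, h, h' => by
    simp only [List.map_cons, List.cons.injEq, List.reduceOption_cons_of_none] at h h'
    rw [List.eq_of_map_isSome_eq_of_reduceOption_eq h.2 h']
  | some a :: l₁, some b :: l₂, h, h' => by
    simp only [List.map_cons, List.cons.injEq, List.reduceOption_cons_of_some] at h h'
    rw [h'.1, List.eq_of_map_isSome_eq_of_reduceOption_eq h.2 h'.2]
  | [], _ :: _, h, _ | _ :: _, [], h, _ => by simp at h
  | none :: _, some _ :: _, h, _ | some _ :: _, none :: _, h, _ => by simp at h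

namespace SimpleGraph

variable {V : Type*} (G : SimpleGraph V)

open Classical in
noncomputable def closedBallFinset [Fintype V] (c : V) (r : ℕ) : Finset V :=
  {v | G.edist v c ≤ r}

variable {G}

@[simp]
theorem mem_closedBallFinset [Fintype V] {c v : V} {r : ℕ} :
    v ∈ G.closedBallFinset c r ↔ G.edist v c ≤ r := by
  simp [closedBallFinset]

theorem mem_closedBallFinset_comm [Fintype V] {c v : V} {r : ℕ} :
    v ∈ G.closedBallFinset c r ↔ c ∈ G.closedBallFinset v r := by
  simp [edist_comm]

theorem exists_adj_edist_le_of_edist_le_succ {u v : V} {r : ℕ} (h : G.edist v u ≤ r + 1)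
    (hvu : v ≠ u) : ∃ w, G.Adj v w ∧ G.edist w u ≤ r := by
  obtain ⟨p, hp⟩ := exists_walk_of_edist_ne_top (ne_top_of_le_ne_top (by simp) h)
  cases p with
  | nil => exact absurd rfl hvu
  | cons hadj q =>
    refine ⟨_, hadj, (edist_le q).trans ?_⟩
    rw [← hp, Walk.length_cons, Nat.cast_succ] at h
    exact_mod_cast (ENat.add_le_add_iff_right ENat.one_ne_top).mp h

theorem card_closedBallFinset_le [Fintype V] [DecidableRel G.Adj] {Δ : ℕ}
    (hdeg : ∀ v, G.degree v ≤ Δ) (c : V) :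
    ∀ r : ℕ, (G.closedBallFinset c r).card ≤ ∑ i ∈ range (r + 1), Δ ^ i
  | 0 => by
    have : G.closedBallFinset c 0 ⊆ {c} := fun v hv => by simpa using hv
    simpa using card_le_card this
  | r + 1 => by
    classical
    have hsub : G.closedBallFinset c (r + 1) ⊆
        insert c ((G.closedBallFinset c r).biUnion fun w => G.neighborFinset w) := by
      intro v hv
      by_cases hvc : v = c
      · exact hvc ▸ mem_insert_self _ _
      obtain ⟨w, hvw, hw⟩ :=
        exists_adj_edist_le_of_edist_le_succ (by exact_mod_cast mem_closedBallFinset.mp hv) hvc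
      exact mem_insert_of_mem (mem_biUnion.mpr
        ⟨w, mem_closedBallFinset.mpr hw, (mem_neighborFinset _ _ _).mpr hvw.symm⟩)
    calc _ ≤ _ := card_le_card hsub
      _ ≤ 1 + ∑ w ∈ G.closedBallFinset c r, (G.neighborFinset w).card :=
          (card_insert_le _ _).trans (by rw [add_comm]; gcongr; exact card_biUnion_le)
      _ ≤ 1 + (G.closedBallFinset c r).card * Δ := by
          gcongr
          exact sum_le_card_nsmul _ _ _ fun w _ => (card_neighborFinset_eq_degree G w).trans_le
            (hdeg w)
      _ ≤ 1 + (∑ i ∈ range (r + 1), Δ ^ i) * Δ := by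
          gcongr
          exact card_closedBallFinset_le hdeg c r
      _ = ∑ i ∈ range (r + 1 + 1), Δ ^ i := by
          rw [sum_range_succ' _ (r + 1), sum_mul]
          simp [pow_succ, add_comm]

end SimpleGraph

theorem sum_range_pow_le_two_mul_pow {Δ : ℕ} (hΔ : 2 ≤ Δ) :
    ∀ r : ℕ, ∑ i ∈ range (r + 1), Δ ^ i ≤ 2 * Δ ^ r
  | 0 => by simp
  | r + 1 => by
    rw [sum_range_succ, pow_succ]
    have := sum_range_pow_le_two_mul_pow hΔ r
    nlinarith [Nat.mul_le_mul_left (Δ ^ r) hΔ]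

theorem four_pow_mul_two_mul_pow_le {Δ : ℕ} (hΔ : 8 ≤ Δ) (a k : ℕ) :
    4 ^ k * (2 * Δ ^ a) ^ (k - 1) ≤ Δ ^ (k + a * (k - 1)) :=
  calc 4 ^ k * (2 * Δ ^ a) ^ (k - 1) = 4 ^ k * 2 ^ (k - 1) * Δ ^ (a * (k - 1)) := by
        rw [mul_pow, ← pow_mul]; ring
    _ ≤ 4 ^ k * 2 ^ k * Δ ^ (a * (k - 1)) := by gcongr <;> omega
    _ ≤ Δ ^ k * Δ ^ (a * (k - 1)) := by
        rw [← mul_pow]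
        gcongr
        omega
    _ = Δ ^ (k + a * (k - 1)) := (pow_add _ _ _).symm

theorem natCast_mul_pow_mul_rpow_le {n Δ s k : ℕ} {c t : ℝ} (hΔ : 1 < Δ)
    (hn : (n : ℝ) = (Δ : ℝ) ^ t) (hk : 1 ≤ k) (htk : t ≤ k) (hkt : (k : ℝ) ≤ t + 1) (hc : 8 ≤ c) :
    ((n * Δ ^ (k + (s + 8) * (k - 1)) : ℕ) : ℝ) * (Δ : ℝ) ^ (-((s : ℝ) + c) * k) ≤
      (n : ℝ) ^ (11 - c) := by
  have hΔ1 : (1 : ℝ) < Δ := by exact_mod_cast hΔ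
  have hΔ0 : (0 : ℝ) < Δ := by linarith
  have hn0 : (0 : ℝ) < n := hn ▸ Real.rpow_pos_of_pos hΔ0 t
  -- `t (10 - c)` minus the exponent is `t + (c - 9)(k - t) + s + 8`, and `(c - 9)(k - t) ≥ -1`.
  have hexp : ((k + (s + 8) * (k - 1) : ℕ) : ℝ) + -((s : ℝ) + c) * k ≤ t * (10 - c) := by
    push_cast [Nat.cast_sub hk]
    nlinarith [mul_nonneg (sub_nonneg.mpr hc) (sub_nonneg.mpr htk)]
  calc ((n * Δ ^ (k + (s + 8) * (k - 1)) : ℕ) : ℝ) * (Δ : ℝ) ^ (-((s : ℝ) + c) * k)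
      = n * (Δ : ℝ) ^ (((k + (s + 8) * (k - 1) : ℕ) : ℝ) + -((s : ℝ) + c) * k) := by
        rw [Real.rpow_add hΔ0, Real.rpow_natCast]
        push_cast
        ring
    _ ≤ n * (Δ : ℝ) ^ (t * (10 - c)) :=
        mul_le_mul_of_nonneg_left (Real.rpow_le_rpow_of_exponent_le hΔ1.le hexp) hn0.le
    _ = (n : ℝ) ^ (11 - c) := by
        rw [Real.rpow_mul hΔ0.le, ← hn, show (11 : ℝ) - c = 10 - c + 1 by ring,
          Real.rpow_add_one hn0.ne', mul_comm]

theorem sdist_le_coe_iff {V : Type*} {G : SimpleGraph V} {A B : Set V} {k : ℕ} :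
    sdist G A B ≤ k ↔ ∃ a ∈ A, ∃ b ∈ B, G.edist a b ≤ k := by
  refine ⟨fun h => ?_, fun ⟨a, ha, b, hb, hab⟩ =>
    (iInf₂_le_of_le a ha (iInf₂_le b hb)).trans hab⟩
  by_contra! hcon
  have : (k : ℕ∞) + 1 ≤ sdist G A B :=
    le_iInf₂ fun a ha => le_iInf₂ fun b hb => Order.add_one_le_of_lt (hcon a ha b hb)
  have : k + 1 ≤ k := by exact_mod_cast this.trans h
  omega

theorem Indep.subset {V : Type*} {G : SimpleGraph V} {α : ℕ} {S T : Set V} (h : Indep G α T)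
    (hST : S ⊆ T) : Indep G α S :=
  fun u hu w hw => h u (hST hu) w (hST hw)

namespace Shattering

open SimpleGraph

variable {V : Type*}

def IsConnectedBy (nb : V → Finset V) (S : Finset V) : Prop :=
  ∀ A ⊆ S, A.Nonempty → A ≠ S → ∃ x ∈ A, ∃ y ∈ S, y ∉ A ∧ y ∈ nb x

theorem isConnectedBy_singleton (nb : V → Finset V) (v : V) : IsConnectedBy nb {v} := by
  intro A hA hAne hAv
  exact absurd ((subset_singleton_iff.mp hA).resolve_left hAne.ne_empty) hAv

theorem IsConnectedBy.insert_of_mem_nb [DecidableEq V] {nb : V → Finset V} {S : Finset V}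
    {x y : V} (hsymm : ∀ x y, y ∈ nb x → x ∈ nb y) (hS : IsConnectedBy nb S) (hx : x ∈ S)
    (hy : y ∈ nb x) : IsConnectedBy nb (insert y S) := by
  by_cases hyS : y ∈ S
  · rwa [Finset.insert_eq_of_mem hyS]
  intro A hA hAne hAS
  by_cases hyA : y ∈ A
  · have hxy : x ≠ y := fun h => hyS (h ▸ hx)
    have hA' : A.erase y ⊆ S := fun z hz => by
      obtain ⟨hzy, hzA⟩ := mem_erase.mp hz
      exact (mem_insert.mp (hA hzA)).resolve_left hzy
    by_cases hAy : A.erase y = ∅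
    · refine ⟨y, hyA, x, mem_insert_of_mem hx, fun hxA => ?_, hsymm x y hy⟩
      exact notMem_empty x (hAy ▸ mem_erase.mpr ⟨hxy, hxA⟩)
    · have hAS' : A.erase y ≠ S := by
        rintro h
        exact hAS (by rw [← h, insert_erase hyA])
      obtain ⟨x', hx', y', hy'S, hy'A, hy'⟩ :=
        hS _ hA' (nonempty_iff_ne_empty.mpr hAy) hAS'
      refine ⟨x', mem_of_mem_erase hx', y', mem_insert_of_mem hy'S, fun h => hy'A ?_, hy'⟩
      exact mem_erase.mpr ⟨fun h' => hyS (h' ▸ hy'S), h⟩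
  · have hAS' : A ⊆ S := fun z hz => (mem_insert.mp (hA hz)).resolve_left fun h => hyA (h ▸ hz)
    by_cases hAeq : A = S
    · exact ⟨x, hAeq ▸ hx, y, mem_insert_self y S, hyA, hy⟩
    · obtain ⟨x', hx', y', hy'S, hy'A, hy'⟩ := hS A hAS' hAne hAeq
      exact ⟨x', hx', y', mem_insert_of_mem hy'S, hy'A, hy'⟩

theorem IsConnectedBy.exists_subset_card_eq [DecidableEq V] {nb : V → Finset V} {U : Finset V}
    (hsymm : ∀ x y, y ∈ nb x → x ∈ nb y) (hU : IsConnectedBy nb U) {m : ℕ} (hm : 0 < m)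
    (hmU : m ≤ U.card) : ∃ S ⊆ U, S.card = m ∧ IsConnectedBy nb S := by
  induction m, hm using Nat.le_induction with
  | base =>
    obtain ⟨v, hv⟩ := card_pos.mp (by omega : 0 < U.card)
    exact ⟨{v}, singleton_subset_iff.mpr hv, card_singleton v, isConnectedBy_singleton nb v⟩
  | succ m hm ih =>
    obtain ⟨S, hSU, hcard, hS⟩ := ih (by omega)
    obtain ⟨x, hx, y, hyU, hyS, hy⟩ :=
      hU S hSU (card_pos.mp (by omega)) (by rintro rfl; omega)
    exact ⟨insert y S, insert_subset hyU hSU, by rw [card_insert_of_notMem hyS, hcard],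
      hS.insert_of_mem_nb hsymm hx hy⟩

theorem IsConnectedBy.eq_of_closed {nb : V → Finset V} {S A : Finset V}
    (hS : IsConnectedBy nb S) (hAS : A ⊆ S) (hA : A.Nonempty)
    (hcl : ∀ x ∈ A, ∀ y ∈ S, y ∈ nb x → y ∈ A) : A = S := by
  by_contra hne
  obtain ⟨x, hx, y, hyS, hyA, hy⟩ := hS A hAS hA hne
  exact hyA (hcl x hx y hyS hy)

section DepthFirstSearch

variable [DecidableEq V] (nb : V → Finset V)

/-- Rebuilds the visited set of a depth-first search from its trace: `none` pops the stack and
`some j` pushes the `j`-th not yet visited neighbour of the top. -/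
noncomputable def replay : List (Option ℕ) → List V → Finset V → Finset V
  | [], _, A => A
  | none :: m, st, A => replay m st.tail A
  | some _ :: _, [], A => A
  | some j :: m, x :: st, A =>
    match (nb x \ A).toList[j]? with
    | some u => replay m (u :: x :: st) (insert u A)
    | none => A

noncomputable def dfsTrace (S : Finset V) : ℕ → List V → Finset V → List (Option ℕ)
  | 0, _, _ => []
  | f + 1, [], A => none :: dfsTrace S f [] A
  | f + 1, x :: st, A =>
    match (nb x \ A).toList.find? (· ∈ S) with
    | some u => some ((nb x \ A).toList.idxOf u) :: dfsTrace S f (u :: x :: st) (insert u A)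
    | none => none :: dfsTrace S f st A

variable {nb} {S : Finset V}

theorem length_dfsTrace : ∀ f st A, (dfsTrace nb S f st A).length = f
  | 0, _, _ => rfl
  | f + 1, [], A => by simp [dfsTrace, length_dfsTrace f]
  | f + 1, x :: st, A => by
    unfold dfsTrace
    split <;> simp [length_dfsTrace f]

theorem lt_of_some_mem_dfsTrace {D : ℕ} (hD : ∀ x, (nb x).card ≤ D) :
    ∀ {f st A j}, some j ∈ dfsTrace nb S f st A → j < D
  | 0, _, _, _, h => by simp [dfsTrace] at h
  | f + 1, [], A, j, h => by
    simp only [dfsTrace, List.mem_cons, reduceCtorEq, false_or] at h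
    exact lt_of_some_mem_dfsTrace hD h
  | f + 1, x :: st, A, j, h => by
    unfold dfsTrace at h
    split at h
    · next u hu =>
      rcases List.mem_cons.mp h with h | h
      · cases Option.some_injective _ h
        calc (nb x \ A).toList.idxOf u < (nb x \ A).toList.length :=
              List.idxOf_lt_length_iff.mpr (List.mem_of_find?_eq_some hu)
          _ ≤ D := by rw [length_toList]; exact (card_le_card sdiff_subset).trans (hD x)
      · exact lt_of_some_mem_dfsTrace hD h
    · simp only [List.mem_cons, reduceCtorEq, false_or] at h
      exact lt_of_some_mem_dfsTrace hD h

theorem length_reduceOption_dfsTrace_add_card : ∀ f st A,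
    (dfsTrace nb S f st A).reduceOption.length + A.card =
      (replay nb (dfsTrace nb S f st A) st A).card
  | 0, _, _ => by simp [dfsTrace, replay]
  | f + 1, [], A => by
    simp [dfsTrace, replay, length_reduceOption_dfsTrace_add_card f]
  | f + 1, x :: st, A => by
    unfold dfsTrace
    split
    · next u hu =>
      have hu' : u ∈ (nb x \ A).toList := List.mem_of_find?_eq_some hu
      have huA : u ∉ A := (mem_sdiff.mp (mem_toList.mp hu')).2
      rw [replay, List.getElem?_idxOf hu', List.reduceOption_cons_of_some, List.length_cons]
      simp only
      rw [← length_reduceOption_dfsTrace_add_card f, card_insert_of_notMem huA]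
      ring
    · rw [replay, List.reduceOption_cons_of_none]
      exact length_reduceOption_dfsTrace_add_card f st A

/-- Every vertex of `S \ A` is pushed once and then popped once, hence the fuel. -/
theorem replay_dfsTrace (hS : IsConnectedBy nb S) : ∀ f st A, A ⊆ S → A.Nonempty →
    (∀ x ∈ A, x ∉ st → ∀ y ∈ S, y ∈ nb x → y ∈ A) → 2 * (S.card - A.card) + st.length ≤ f →
    replay nb (dfsTrace nb S f st A) st A = S
  | 0, st, A, hAS, hA, hcl, hf => by
    obtain rfl : st = [] := List.eq_nil_of_length_eq_zero (by omega)
    exact hS.eq_of_closed hAS hA fun x hx => hcl x hx List.not_mem_nil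
  | f + 1, [], A, hAS, hA, hcl, _ => by
    have hAS' : A = S := hS.eq_of_closed hAS hA fun x hx => hcl x hx List.not_mem_nil
    rw [dfsTrace, replay, List.tail_nil]
    exact replay_dfsTrace hS f [] A hAS hA hcl (by simp [hAS'])
  | f + 1, x :: st, A, hAS, hA, hcl, hf => by
    unfold dfsTrace
    split
    · next u hu =>
      have hu' : u ∈ (nb x \ A).toList := List.mem_of_find?_eq_some hu
      have huS : u ∈ S := by simpa using List.find?_some hu
      have huA : u ∉ A := (mem_sdiff.mp (mem_toList.mp hu')).2
      have hcard : A.card < S.card := card_lt_card ⟨hAS, fun h => huA (h huS)⟩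
      rw [replay, List.getElem?_idxOf hu']
      refine replay_dfsTrace hS f _ _ (insert_subset huS hAS) (insert_nonempty _ _) ?_ ?_
      · intro z hz hzst y hyS hy
        have hzA : z ∈ A :=
          (mem_insert.mp hz).resolve_left fun h => hzst (h ▸ List.mem_cons_self)
        exact mem_insert_of_mem (hcl z hzA (fun h => hzst (List.mem_cons_of_mem _ h)) y hyS hy)
      · simp only [List.length_cons] at hf ⊢
        rw [card_insert_of_notMem huA]
        omega
    · next hnone =>
      rw [replay, List.tail_cons]
      refine replay_dfsTrace hS f st A hAS hA ?_ (by simp only [List.length_cons] at hf; omega)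
      intro z hz hzst y hyS hy
      by_cases hzx : z = x
      · subst hzx
        by_contra hyA
        rw [List.find?_eq_none] at hnone
        exact hnone y (mem_toList.mpr (mem_sdiff.mpr ⟨hy, hyA⟩)) (by simpa using hyS)
      · exact hcl z hz (by simp [hzx, hzst]) y hyS hy

theorem replay_dfsTrace_singleton {v : V} (hS : IsConnectedBy nb S) (hv : v ∈ S) :
    replay nb (dfsTrace nb S (2 * S.card) [v] {v}) [v] {v} = S := by
  have hpos : 0 < S.card := card_pos.mpr ⟨v, hv⟩
  refine replay_dfsTrace hS _ _ _ (singleton_subset_iff.mpr hv) (singleton_nonempty v) ?_ ?_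
  · intro x hx hxst
    simp_all
  · simp only [card_singleton, List.length_singleton]
    omega

theorem length_reduceOption_dfsTrace_singleton {v : V} (hS : IsConnectedBy nb S) (hv : v ∈ S) :
    (dfsTrace nb S (2 * S.card) [v] {v}).reduceOption.length = S.card - 1 := by
  have := length_reduceOption_dfsTrace_add_card (nb := nb) (S := S) (2 * S.card) [v] {v}
  rw [replay_dfsTrace_singleton hS hv, card_singleton] at this
  omega

open Classical in
/-- The trace of the search determines `S`; it has `2k` steps, `k - 1` of which are pushes with
an index below `D`. -/
theorem card_filter_mem_isConnectedBy_le [Fintype V] {D : ℕ} (hD : 0 < D)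
    (hnb : ∀ x, (nb x).card ≤ D) (v : V) (k : ℕ) :
    #{S : Finset V | v ∈ S ∧ S.card = k ∧ IsConnectedBy nb S} ≤ 4 ^ k * D ^ (k - 1) := by
  set family : Finset (Finset V) := {S | v ∈ S ∧ S.card = k ∧ IsConnectedBy nb S}
  set trace := fun S : Finset V => dfsTrace nb S (2 * k) [v] {v}
  let code : Finset V → List.Vector Bool (2 * k) × (Fin (k - 1) → Fin D) := fun S =>
    (⟨(trace S).map Option.isSome, by simp [trace, length_dfsTrace]⟩,
     fun i => ⟨(trace S).reduceOption.getD i 0 % D, Nat.mod_lt _ hD⟩)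
  have hdecode : ∀ S ∈ family, replay nb (trace S) [v] {v} = S ∧
      (trace S).reduceOption.length = k - 1 := by
    intro S hS
    obtain ⟨hv, rfl, hconn⟩ := (mem_filter.mp hS).2
    exact ⟨replay_dfsTrace_singleton hconn hv, length_reduceOption_dfsTrace_singleton hconn hv⟩
  have hinj : Set.InjOn code family := by
    intro S₁ hS₁ S₂ hS₂ heq
    obtain ⟨hreplay₁, hlen₁⟩ := hdecode S₁ hS₁
    obtain ⟨hreplay₂, hlen₂⟩ := hdecode S₂ hS₂
    have hpattern := congrArg (fun c => c.1.1) heq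
    have hchoices : (trace S₁).reduceOption = (trace S₂).reduceOption := by
      refine List.ext_getElem (hlen₁.trans hlen₂.symm) fun i hi₁ hi₂ => ?_
      have := congrArg Fin.val (congrFun (congrArg Prod.snd heq) ⟨i, hlen₁ ▸ hi₁⟩)
      simp only [code, List.getD_eq_getElem _ _ hi₁, List.getD_eq_getElem _ _ hi₂] at this
      have hlt : ∀ S, ∀ j ∈ (trace S).reduceOption, j < D := fun S j hj =>
        lt_of_some_mem_dfsTrace hnb (List.reduceOption_mem_iff.mp hj)
      rwa [Nat.mod_eq_of_lt (hlt _ _ (List.getElem_mem hi₁)),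
        Nat.mod_eq_of_lt (hlt _ _ (List.getElem_mem hi₂))] at this
    rw [← hreplay₁, ← hreplay₂,
      List.eq_of_map_isSome_eq_of_reduceOption_eq hpattern hchoices]
  calc #family ≤ #(univ : Finset (List.Vector Bool (2 * k) × (Fin (k - 1) → Fin D))) :=
        card_le_card_of_injOn code (fun _ _ => mem_univ _) hinj
    _ = 4 ^ k * D ^ (k - 1) := by simp [card_vector, pow_mul]

end DepthFirstSearch

open Classical in
theorem card_filter_isConnectedBy_le [Fintype V] {nb : V → Finset V} {D : ℕ} (hD : 0 < D)
    (hnb : ∀ x, (nb x).card ≤ D) {k : ℕ} (hk : 0 < k) :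
    #{S : Finset V | S.card = k ∧ IsConnectedBy nb S} ≤
      Fintype.card V * (4 ^ k * D ^ (k - 1)) :=
  calc _ ≤ #(univ.biUnion fun v =>
        {S : Finset V | v ∈ S ∧ S.card = k ∧ IsConnectedBy nb S}) := by
        refine card_le_card fun S hS => ?_
        obtain ⟨hcard, hS⟩ := (mem_filter.mp hS).2
        obtain ⟨v, hv⟩ := card_pos.mp (hcard ▸ hk)
        exact mem_biUnion.mpr ⟨v, mem_univ v, mem_filter.mpr ⟨mem_univ S, hv, hcard, hS⟩⟩
    _ ≤ ∑ v, #{S : Finset V | v ∈ S ∧ S.card = k ∧ IsConnectedBy nb S} := card_biUnion_le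
    _ ≤ ∑ _v : V, 4 ^ k * D ^ (k - 1) :=
        sum_le_sum fun v _ => card_filter_mem_isConnectedBy_le hD hnb v k
    _ = _ := by simp

theorem exists_indep_subset_forall_edist_le (G : SimpleGraph V) (r : ℕ) (C : Finset V) :
    ∃ U ⊆ C, Indep G (r + 1) ↑U ∧ ∀ x ∈ C, ∃ u ∈ U, G.edist x u ≤ r := by
  classical
  obtain ⟨U, hU, hmax⟩ := exists_max_image
    (C.powerset.filter fun U : Finset V => Indep G (r + 1) ↑U) card ⟨∅, by simp [Indep]⟩
  obtain ⟨hUC, hUind⟩ := mem_filter.mp hU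
  refine ⟨U, mem_powerset.mp hUC, hUind, fun x hx => ?_⟩
  by_contra! hfar
  have hxU : x ∉ U := fun hxU => by simpa using hfar x hxU
  have hfar' : ∀ u ∈ U, ((r + 1 : ℕ) : ℕ∞) ≤ G.edist x u := fun u hu => by
    push_cast
    exact Order.add_one_le_of_lt (hfar u hu)
  have hind : Indep G (r + 1) ↑(insert x U) := by
    intro u hu w hw huw
    simp only [coe_insert, Set.mem_insert_iff, mem_coe] at hu hw
    rcases hu with rfl | hu <;> rcases hw with rfl | hw
    · exact absurd rfl huw
    · exact hfar' w hw
    · exact G.edist_comm ▸ hfar' u hu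
    · exact hUind u hu w hw huw
  have := hmax (insert x U)
    (mem_filter.mpr ⟨mem_powerset.mpr (insert_subset hx (mem_powerset.mp hUC)), hind⟩)
  rw [card_insert_of_notMem hxU] at this
  omega

section GraphMetric

variable [Fintype V] {G : SimpleGraph V}

theorem sConnected_iff_isConnectedBy {α : ℕ} {S : Finset V} :
    sConnected G α ↑S ↔ IsConnectedBy (G.closedBallFinset · α) S := by
  constructor
  · intro h A hAS hA hne
    obtain ⟨a, ha, b, ⟨hbS, hbA⟩, hab⟩ := sdist_le_coe_iff.mp
      (h ↑A (coe_subset.mpr hAS) (coe_nonempty.mpr hA) (coe_injective.ne hne))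
    exact ⟨a, ha, b, hbS, hbA, mem_closedBallFinset.mpr (G.edist_comm ▸ hab)⟩
  · intro h S' hS' hne hne'
    obtain ⟨A, rfl⟩ := (S.finite_toSet.subset hS').exists_finset_coe
    obtain ⟨x, hx, y, hyS, hyA, hy⟩ :=
      h A (coe_subset.mp hS') (coe_nonempty.mp hne) fun h => hne' (congrArg _ h)
    exact sdist_le_coe_iff.mpr ⟨x, hx, y, ⟨hyS, hyA⟩, G.edist_comm ▸ mem_closedBallFinset.mp hy⟩

theorem card_le_card_mul_of_forall_edist_le [DecidableRel G.Adj] {Δ r : ℕ}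
    (hdeg : ∀ v, G.degree v ≤ Δ) {C U : Finset V} (hcov : ∀ x ∈ C, ∃ u ∈ U, G.edist x u ≤ r) :
    C.card ≤ U.card * ∑ i ∈ range (r + 1), Δ ^ i := by
  classical
  calc C.card ≤ (U.biUnion fun u => G.closedBallFinset u r).card := card_le_card fun x hx => by
        obtain ⟨u, hu, hxu⟩ := hcov x hx
        exact mem_biUnion.mpr ⟨u, hu, mem_closedBallFinset.mpr hxu⟩
    _ ≤ ∑ u ∈ U, (G.closedBallFinset u r).card := card_biUnion_le
    _ ≤ U.card * ∑ i ∈ range (r + 1), Δ ^ i :=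
        sum_le_card_nsmul _ _ _ fun u _ => card_closedBallFinset_le hdeg u r

theorem IsConnectedBy.of_forall_edist_le {s r : ℕ} {C U : Finset V}
    (hC : IsConnectedBy (G.closedBallFinset · s) C) (hUC : U ⊆ C) (hU : Indep G (r + 1) ↑U)
    (hcov : ∀ x ∈ C, ∃ u ∈ U, G.edist x u ≤ r) :
    IsConnectedBy (G.closedBallFinset · (s + 2 * r)) U := by
  classical
  intro A hAU hA hAU'
  obtain ⟨w, hwU, hwA⟩ := exists_of_ssubset (Finset.ssubset_iff_subset_ne.mpr ⟨hAU, hAU'⟩)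
  -- `C₁` misses `U \ A` by independence, and a step of `C` out of `C₁` links `A` to `U \ A`.
  set C₁ := C.filter fun x => ∃ u ∈ A, G.edist x u ≤ r
  have hC₁ : C₁.Nonempty := by
    obtain ⟨a, ha⟩ := hA
    exact ⟨a, mem_filter.mpr ⟨hUC (hAU ha), a, ha, by simp⟩⟩
  have hwC₁ : w ∉ C₁ := by
    intro hw
    obtain ⟨u, hu, hwu⟩ := (mem_filter.mp hw).2
    have : r + 1 ≤ r := by
      exact_mod_cast (hU w hwU u (hAU hu) fun h => hwA (h ▸ hu)).trans hwu
    omega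
  obtain ⟨x, hx, y, hyC, hyC₁, hyx⟩ :=
    hC C₁ (filter_subset _ _) hC₁ fun h => hwC₁ (h ▸ hUC hwU)
  obtain ⟨u, hu, hxu⟩ := (mem_filter.mp hx).2
  obtain ⟨u', hu', hyu'⟩ := hcov y hyC
  have hu'A : u' ∉ A := fun h => hyC₁ (mem_filter.mpr ⟨hyC, u', h, hyu'⟩)
  refine ⟨u, hu, u', hu', hu'A, mem_closedBallFinset.mpr ?_⟩
  calc G.edist u' u ≤ G.edist u' y + G.edist y x + G.edist x u :=
        G.edist_triangle.trans (add_le_add G.edist_triangle le_rfl)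
    _ ≤ r + s + r := by
        gcongr
        · exact G.edist_comm ▸ hyu'
        · exact mem_closedBallFinset.mp hyx
    _ = ↑(s + 2 * r) := by push_cast; ring

open Classical in
theorem card_filter_indep_isConnectedBy_le [DecidableRel G.Adj] {Δ : ℕ}
    (hdeg : ∀ v, G.degree v ≤ Δ) (hΔ : 8 ≤ Δ) (α a : ℕ) {k : ℕ} (hk : 0 < k) :
    #{S : Finset V | S.card = k ∧ Indep G α ↑S ∧ IsConnectedBy (G.closedBallFinset · a) S} ≤
      Fintype.card V * Δ ^ (k + a * (k - 1)) :=
  calc _ ≤ #{S : Finset V | S.card = k ∧ IsConnectedBy (G.closedBallFinset · a) S} :=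
        card_le_card fun S hS => mem_filter.mpr
          ⟨mem_univ S, (mem_filter.mp hS).2.1, (mem_filter.mp hS).2.2.2⟩
    _ ≤ Fintype.card V * (4 ^ k * (2 * Δ ^ a) ^ (k - 1)) :=
        card_filter_isConnectedBy_le (by positivity)
          (fun v => (card_closedBallFinset_le hdeg v a).trans
            (sum_range_pow_le_two_mul_pow (by omega) a)) hk
    _ ≤ _ := Nat.mul_le_mul_left _ (four_pow_mul_two_mul_pow_le hΔ a k)

theorem measure_exists_indep_sConnected_le {Ω : Type*} [MeasureSpace Ω] (H : SimpleGraph V)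
    [DecidableRel H.Adj] {n Δ s : ℕ} (hn : Fintype.card V = n) (hΔ8 : 8 ≤ Δ) (hΔn : Δ ≤ n)
    (hdeg : ∀ v, H.degree v ≤ Δ) {t c : ℝ} (ht : t = Real.log n / Real.log Δ) (hc : 8 ≤ c)
    (B : Ω → Set V) (hB : ∀ U : Finset V, Indep H 5 (U : Set V) →
      ℙ {ω | (U : Set V) ⊆ B ω} ≤ ENNReal.ofReal ((Δ : ℝ) ^ (-((s : ℝ) + c) * (U.card : ℝ)))) :
    ℙ {ω | ∃ U : Finset V, (U : Set V) ⊆ B ω ∧ Indep H 5 (U : Set V) ∧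
        sConnected H (s + 8) (U : Set V) ∧ t ≤ (U.card : ℝ)}
      ≤ ENNReal.ofReal ((n : ℝ) ^ (11 - c)) := by
  classical
  have hΔ1 : (1 : ℝ) < Δ := by exact_mod_cast (by omega : 1 < Δ)
  have hnt : (n : ℝ) = (Δ : ℝ) ^ t := by
    rw [ht]
    exact (Real.rpow_logb (by linarith) hΔ1.ne' (by exact_mod_cast (by omega : 0 < n))).symm
  have ht1 : 1 ≤ t := by
    rw [ht, le_div_iff₀ (Real.log_pos hΔ1), one_mul]
    exact Real.log_le_log (by positivity) (by exact_mod_cast hΔn)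
  set k := ⌈t⌉₊
  have hk : 1 ≤ k := Nat.one_le_ceil_iff.mpr (by linarith)
  set F : Finset (Finset V) :=
    {S | S.card = k ∧ Indep H 5 ↑S ∧ IsConnectedBy (H.closedBallFinset · (s + 8)) S}
  have hevent : {ω | ∃ U : Finset V, (U : Set V) ⊆ B ω ∧ Indep H 5 (U : Set V) ∧
      sConnected H (s + 8) (U : Set V) ∧ t ≤ (U.card : ℝ)} ⊆ ⋃ S ∈ F, {ω | ↑S ⊆ B ω} := by
    rintro ω ⟨U, hUB, hU, hconn, htU⟩
    obtain ⟨S, hSU, hS, hSconn⟩ := (sConnected_iff_isConnectedBy.mp hconn).exists_subset_card_eq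
      (fun _ _ => mem_closedBallFinset_comm.mp) hk (Nat.ceil_le.mpr htU)
    exact Set.mem_biUnion (mem_filter.mpr ⟨mem_univ _, hS, hU.subset (coe_subset.mpr hSU), hSconn⟩)
      ((coe_subset.mpr hSU).trans hUB)
  have hF : #F ≤ n * Δ ^ (k + (s + 8) * (k - 1)) :=
    hn ▸ card_filter_indep_isConnectedBy_le hdeg hΔ8 5 (s + 8) hk
  calc ℙ _ ≤ ℙ (⋃ S ∈ F, {ω | ↑S ⊆ B ω}) := measure_mono hevent
    _ ≤ ∑ S ∈ F, ℙ {ω | ↑S ⊆ B ω} := measure_biUnion_finset_le _ _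
    _ ≤ ∑ _S ∈ F, ENNReal.ofReal ((Δ : ℝ) ^ (-((s : ℝ) + c) * k)) := by
        refine sum_le_sum fun S hS => ?_
        obtain ⟨hcard, hS, -⟩ := (mem_filter.mp hS).2
        simpa [hcard] using hB S hS
    _ ≤ ENNReal.ofReal (((n * Δ ^ (k + (s + 8) * (k - 1)) : ℕ) : ℝ) *
          (Δ : ℝ) ^ (-((s : ℝ) + c) * k)) := by
        rw [sum_const, nsmul_eq_mul, ENNReal.ofReal_mul (by positivity), ENNReal.ofReal_natCast]
        gcongr
    _ ≤ ENNReal.ofReal ((n : ℝ) ^ (11 - c)) :=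
        ENNReal.ofReal_le_ofReal (natCast_mul_pow_mul_rpow_le (by omega) hnt hk (Nat.le_ceil t)
          (Nat.ceil_lt_add_one (by linarith)).le hc)

theorem exists_indep_sConnected_subset {H : SimpleGraph V} [DecidableRel H.Adj] {Δ s : ℕ}
    (hdeg : ∀ v, H.degree v ≤ Δ) {t : ℝ} {C : Finset V} (hC : sConnected H s ↑C)
    (htC : t * (1 + (Δ : ℝ) + (Δ : ℝ) ^ 2 + (Δ : ℝ) ^ 3 + (Δ : ℝ) ^ 4) ≤ C.card) :
    ∃ U ⊆ C, Indep H 5 ↑U ∧ sConnected H (s + 8) ↑U ∧ t ≤ U.card := by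
  obtain ⟨U, hUC, hU, hcov⟩ := exists_indep_subset_forall_edist_le H 4 C
  have hUconn : IsConnectedBy (H.closedBallFinset · (s + 2 * 4)) U :=
    (sConnected_iff_isConnectedBy.mp hC).of_forall_edist_le hUC hU hcov
  refine ⟨U, hUC, hU, sConnected_iff_isConnectedBy.mpr hUconn, ?_⟩
  have hσ : ((∑ i ∈ range (4 + 1), Δ ^ i : ℕ) : ℝ) = 1 + Δ + Δ ^ 2 + Δ ^ 3 + Δ ^ 4 := by
    simp [sum_range_succ]
  have hcard : (C.card : ℝ) ≤ U.card * (1 + Δ + Δ ^ 2 + Δ ^ 3 + Δ ^ 4) := by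
    rw [← hσ]
    exact_mod_cast card_le_card_mul_of_forall_edist_le hdeg hcov
  exact le_of_mul_le_mul_right (htC.trans hcard) (by positivity)

end GraphMetric

end Shattering

open Shattering

theorem shattering_general
    {V Ω : Type*} [Fintype V] [MeasureSpace Ω]
    (H : SimpleGraph V) [DecidableRel H.Adj]
    (n Δ : ℕ) (hn : Fintype.card V = n)
    (hΔ8 : 8 ≤ Δ) (hΔn : Δ ≤ n)
    (hdeg : ∀ v : V, H.degree v ≤ Δ)
    (t : ℝ) (ht : t = Real.log n / Real.log Δ)
    (s : ℕ) (c : ℝ) (hc : 8 ≤ c)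
    (B : Ω → Set V)
    (hB : ∀ U : Finset V, Indep H 5 (U : Set V) →
      ℙ {ω | (U : Set V) ⊆ B ω} ≤
        ENNReal.ofReal ((Δ : ℝ) ^ (-((s : ℝ) + c) * (U.card : ℝ)))) :
    ℙ {ω | ∃ U : Finset V, (U : Set V) ⊆ B ω ∧ Indep H 5 (U : Set V) ∧
        sConnected H (s + 8) (U : Set V) ∧ t ≤ (U.card : ℝ)}
      ≤ ENNReal.ofReal ((n : ℝ) ^ (11 - c)) ∧
    ℙ {ω | ∃ C : Finset V, (C : Set V) ⊆ B ω ∧ sConnected H s (C : Set V) ∧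
        t * (1 + (Δ : ℝ) + (Δ : ℝ) ^ 2 + (Δ : ℝ) ^ 3 + (Δ : ℝ) ^ 4) ≤ (C.card : ℝ)}
      ≤ ENNReal.ofReal ((n : ℝ) ^ (11 - c)) := by
  have hP1 := measure_exists_indep_sConnected_le H hn hΔ8 hΔn hdeg ht hc B hB
  refine ⟨hP1, (measure_mono ?_).trans hP1⟩
  rintro ω ⟨C, hCB, hC, htC⟩
  obtain ⟨U, hUC, hU⟩ := exists_indep_sConnected_subset hdeg hC htC
  exact ⟨U, (coe_subset.mpr hUC).trans hCB, hU⟩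

/-- **Shattering.** If `H` is a graph on `n` vertices with maximum degree at most `Δ`
(`8 ≤ Δ ≤ n`), `t = log n / log Δ`, `s ≥ 1`, `c ≥ 8`, and `B` is a random subset such that
every `5`-independent set `U` satisfies `P(U ⊆ B) ≤ Δ^(-(s+c)|U|)`, then:
(P1) with probability at least `1 - n^(11-c)` there is no `5`-independent, `(s+8)`-connected
subset `U ⊆ B` with `|U| ≥ t`; and
(P2) with probability at least `1 - n^(11-c)` every `s`-connected subset `C ⊆ B`
has fewer than `t·(1+Δ+Δ²+Δ³+Δ⁴)` vertices. -/
theorem shattering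
    {V Ω : Type*} [Fintype V] [MeasureSpace Ω] [IsProbabilityMeasure (ℙ : Measure Ω)]
    (H : SimpleGraph V) [DecidableRel H.Adj]
    (n Δ : ℕ) (hn : Fintype.card V = n)
    (hΔ8 : 8 ≤ Δ) (hΔn : Δ ≤ n)
    (hdeg : ∀ v : V, H.degree v ≤ Δ)
    (t : ℝ) (ht : t = Real.log n / Real.log Δ)
    (s : ℕ) (hs : 1 ≤ s) (c : ℝ) (hc : 8 ≤ c)
    (B : Ω → Set V)
    (hmeas : ∀ U : Finset V, MeasurableSet {ω | (U : Set V) ⊆ B ω})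
    (hB : ∀ U : Finset V, Indep H 5 (U : Set V) →
      ℙ {ω | (U : Set V) ⊆ B ω} ≤
        ENNReal.ofReal ((Δ : ℝ) ^ (-((s : ℝ) + c) * (U.card : ℝ)))) :
    ℙ {ω | ∃ U : Finset V, (U : Set V) ⊆ B ω ∧ Indep H 5 (U : Set V) ∧
        sConnected H (s + 8) (U : Set V) ∧ t ≤ (U.card : ℝ)}
      ≤ ENNReal.ofReal ((n : ℝ) ^ (11 - c)) ∧
    ℙ {ω | ∃ C : Finset V, (C : Set V) ⊆ B ω ∧ sConnected H s (C : Set V) ∧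
        t * (1 + (Δ : ℝ) + (Δ : ℝ) ^ 2 + (Δ : ℝ) ^ 3 + (Δ : ℝ) ^ 4) ≤ (C.card : ℝ)}
      ≤ ENNReal.ofReal ((n : ℝ) ^ (11 - c)) :=
  shattering_general H n Δ hn hΔ8 hΔn hdeg t ht s c hc B hB
end

section
/- Let n ≥ 3 and let Δ be an integer with 3 ≤ Δ ≤ n, set t := log n / log Δ, and let c ≥ 5 be a real number. Let H be a finite simple graph with at most t·Δ⁴ vertices. Let B be a random subset of the vertex set of H such that for every vertex set U that is 5-independent in H, P(U ⊆ B) ≤ Δ^{−c·|U|}. Then the probability that there exists a vertex set U ⊆ B that is 5-independent in H with |U| ≥ t is at most n^{5−c}. -/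
/-!
Any `5`-independent `U ⊆ B` with `|U| ≥ t` contains one of size exactly `k = ⌈t⌉`, so a union bound
over the at most `N.choose k` such sets (`N ≤ t Δ⁴` vertices) gives probability at most
`N.choose k · Δ^(-c k) ≤ (e N / k)^k Δ^(-c k) ≤ Δ^((5 - c) k) ≤ Δ^((5 - c) t) = n^(5 - c)`.
-/

open scoped ENNReal
open MeasureTheory
open scoped ProbabilityTheory

theorem Indep.mono {V : Type*} {G : SimpleGraph V} {α : ℕ} {S T : Set V} (hS : Indep G α S)
    (hTS : T ⊆ S) : Indep G α T :=
  fun u hu v hv huv => hS u (hTS hu) v (hTS hv) huv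

theorem measure_exists_subset_card_le_le_choose_mul {V Ω : Type*} [Fintype V] [MeasurableSpace Ω]
    (μ : Measure Ω) (B : Ω → Set V) (P : Finset V → Prop) (hP : ∀ ⦃U W⦄, W ⊆ U → P U → P W)
    (k : ℕ) (p : ℝ≥0∞) (hB : ∀ U : Finset V, P U → U.card = k → μ {ω | ↑U ⊆ B ω} ≤ p) :
    μ {ω | ∃ U : Finset V, ↑U ⊆ B ω ∧ P U ∧ k ≤ U.card} ≤ (Fintype.card V).choose k * p := by
  classical
  set S := (Finset.univ.powersetCard k).filter P
  have hcover : {ω | ∃ U : Finset V, ↑U ⊆ B ω ∧ P U ∧ k ≤ U.card} ⊆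
      ⋃ W ∈ S, {ω | ↑W ⊆ B ω} := by
    rintro ω ⟨U, hUB, hPU, hkU⟩
    obtain ⟨W, hWU, hWk⟩ := Finset.exists_subset_card_eq hkU
    have hWS : W ∈ S := by simp [S, hWk, hP hWU hPU]
    exact Set.mem_biUnion hWS ((Finset.coe_subset.2 hWU).trans hUB)
  have hcard : S.card ≤ (Fintype.card V).choose k :=
    (Finset.card_filter_le _ _).trans (by rw [Finset.card_powersetCard, Finset.card_univ])
  calc μ _ ≤ ∑ W ∈ S, μ {ω | ↑W ⊆ B ω} := (measure_mono hcover).trans (measure_biUnion_finset_le _ _)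
    _ ≤ S.card * p := by
      rw [← nsmul_eq_mul]
      exact Finset.sum_le_card_nsmul _ _ _ fun W hW =>
        hB W (Finset.mem_filter.1 hW).2 (Finset.mem_powersetCard.1 (Finset.mem_filter.1 hW).1).2
    _ ≤ _ := by gcongr

theorem Nat.choose_le_exp_one_mul_pow {N k : ℕ} {x : ℝ} (hN : (N : ℝ) ≤ k * x) :
    (N.choose k : ℝ) ≤ (Real.exp 1 * x) ^ k := by
  rcases Nat.eq_zero_or_pos k with rfl | hk
  · simp
  have hx : 0 ≤ x := nonneg_of_mul_nonneg_right (N.cast_nonneg.trans hN) (by positivity)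
  calc (N.choose k : ℝ) ≤ N ^ k / k.factorial := Nat.choose_le_pow_div k N
    _ ≤ (k * x) ^ k / k.factorial := by gcongr
    _ = (k : ℝ) ^ k / k.factorial * x ^ k := by rw [mul_pow]; ring
    _ ≤ Real.exp 1 ^ k * x ^ k := by
      gcongr
      rw [← Real.exp_nat_mul, mul_one]
      exact Real.pow_div_factorial_le_exp _ k.cast_nonneg k
    _ = (Real.exp 1 * x) ^ k := (mul_pow _ _ _).symm

theorem Real.rpow_mul_le_rpow_of_logb_le {b x a y : ℝ} (hb : 1 < b) (hx : 0 < x) (ha : a ≤ 0)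
    (hy : Real.logb b x ≤ y) : b ^ (a * y) ≤ x ^ a := by
  calc b ^ (a * y) ≤ b ^ (a * Real.logb b x) :=
        Real.rpow_le_rpow_of_exponent_le hb.le (mul_le_mul_of_nonpos_left hy ha)
    _ = x ^ a := by rw [mul_comm, Real.rpow_mul (by linarith), Real.rpow_logb (by linarith) hb.ne' hx]

theorem choose_mul_rpow_neg_le {n Δ N : ℕ} {c : ℝ} (hn : 0 < n) (hΔ : 3 ≤ Δ) (hc : 5 ≤ c)
    (hN : (N : ℝ) ≤ Real.logb Δ n * Δ ^ 4) :
    (N.choose ⌈Real.logb Δ n⌉₊ : ℝ) * (Δ : ℝ) ^ (-c * ⌈Real.logb Δ n⌉₊) ≤ (n : ℝ) ^ (5 - c) := by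
  set k := ⌈Real.logb Δ n⌉₊
  have hΔ' : (3 : ℝ) ≤ Δ := by exact_mod_cast hΔ
  have hchoose : (N.choose k : ℝ) ≤ (Δ : ℝ) ^ (5 * k : ℕ) := by
    have hNk : (N : ℝ) ≤ k * (Δ : ℝ) ^ 4 := hN.trans (by gcongr; exact Nat.le_ceil _)
    calc (N.choose k : ℝ) ≤ (Real.exp 1 * Δ ^ 4) ^ k := Nat.choose_le_exp_one_mul_pow hNk
      _ ≤ (Δ * Δ ^ 4) ^ k := by
        gcongr; linarith [Real.exp_one_lt_three]
      _ = (Δ : ℝ) ^ (5 * k : ℕ) := by ring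
  calc (N.choose k : ℝ) * (Δ : ℝ) ^ (-c * k) ≤ (Δ : ℝ) ^ (5 * k : ℕ) * (Δ : ℝ) ^ (-c * k) := by
        gcongr
    _ = (Δ : ℝ) ^ ((5 - c) * k) := by
        rw [← Real.rpow_natCast, ← Real.rpow_add (by positivity)]; push_cast; ring_nf
    _ ≤ (n : ℝ) ^ (5 - c) :=
        Real.rpow_mul_le_rpow_of_logb_le (by linarith) (by exact_mod_cast hn) (by linarith)
          (Nat.le_ceil _)

theorem second_phase_shattering_general
    {V Ω : Type*} [Fintype V] [MeasureSpace Ω]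
    (H : SimpleGraph V)
    (n Δ : ℕ) (hn : 3 ≤ n) (hΔ3 : 3 ≤ Δ)
    (t : ℝ) (ht : t = Real.log n / Real.log Δ)
    (c : ℝ) (hc : 5 ≤ c)
    (hsize : (Fintype.card V : ℝ) ≤ t * (Δ : ℝ) ^ 4)
    (B : Ω → Set V)
    (hB : ∀ U : Finset V, Indep H 5 (U : Set V) →
      ℙ {ω | (U : Set V) ⊆ B ω} ≤ ENNReal.ofReal ((Δ : ℝ) ^ (-c * (U.card : ℝ)))) :
    ℙ {ω | ∃ U : Finset V, (U : Set V) ⊆ B ω ∧ Indep H 5 (U : Set V) ∧ t ≤ (U.card : ℝ)}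
      ≤ ENNReal.ofReal ((n : ℝ) ^ (5 - c)) := by
  rw [Real.log_div_log] at ht
  subst ht
  simp_rw [← Nat.ceil_le]
  calc ℙ _ ≤ (Fintype.card V).choose ⌈Real.logb Δ n⌉₊ *
        ENNReal.ofReal ((Δ : ℝ) ^ (-c * ⌈Real.logb Δ n⌉₊)) :=
        measure_exists_subset_card_le_le_choose_mul ℙ B (fun U => Indep H 5 (U : Set V))
          (fun _ _ hWU hU => hU.mono (Finset.coe_subset.2 hWU)) _ _
          fun U hU hcard => hcard ▸ hB U hU
    _ = ENNReal.ofReal ((Fintype.card V).choose ⌈Real.logb Δ n⌉₊ *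
        (Δ : ℝ) ^ (-c * ⌈Real.logb Δ n⌉₊)) := by
        rw [ENNReal.ofReal_mul (by positivity), ENNReal.ofReal_natCast]
    _ ≤ ENNReal.ofReal ((n : ℝ) ^ (5 - c)) :=
        ENNReal.ofReal_le_ofReal (choose_mul_rpow_neg_le (by omega) hΔ3 hc hsize)

/-- **Second-phase shattering.** Let `n ≥ 3`, `3 ≤ Δ ≤ n`, `t = log n / log Δ`, `c ≥ 5`.
If `H` is a graph with at most `t·Δ⁴` vertices and `B` is a random subset such that every
`5`-independent set `U` satisfies `P(U ⊆ B) ≤ Δ^(-c·|U|)`, then the probability that some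
`5`-independent set `U ⊆ B` with `|U| ≥ t` exists is at most `n^(5-c)`. -/
theorem second_phase_shattering
    {V Ω : Type*} [Fintype V] [MeasureSpace Ω] [IsProbabilityMeasure (ℙ : Measure Ω)]
    (H : SimpleGraph V)
    (n Δ : ℕ) (hn : 3 ≤ n) (hΔ3 : 3 ≤ Δ) (hΔn : Δ ≤ n)
    (t : ℝ) (ht : t = Real.log n / Real.log Δ)
    (c : ℝ) (hc : 5 ≤ c)
    (hsize : (Fintype.card V : ℝ) ≤ t * (Δ : ℝ) ^ 4)
    (B : Ω → Set V)
    (hmeas : ∀ U : Finset V, MeasurableSet {ω | (U : Set V) ⊆ B ω})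
    (hB : ∀ U : Finset V, Indep H 5 (U : Set V) →
      ℙ {ω | (U : Set V) ⊆ B ω} ≤ ENNReal.ofReal ((Δ : ℝ) ^ (-c * (U.card : ℝ)))) :
    ℙ {ω | ∃ U : Finset V, (U : Set V) ⊆ B ω ∧ Indep H 5 (U : Set V) ∧ t ≤ (U.card : ℝ)}
      ≤ ENNReal.ofReal ((n : ℝ) ^ (5 - c)) :=
  second_phase_shattering_general H n Δ hn hΔ3 t ht c hc hsize B hB
end

section
/- Let H be a finite simple graph, let α, s ≥ 1 be integers and let β ≥ α−1 be an integer. Let U be a nonempty s-connected set of vertices of H, and let R ⊆ U be an (α,β)-ruling set of U with respect to distances in H. Then R is α-independent in H and (s+2β)-connected in H. -/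
open scoped ENNReal

/-!
Let `R' ⊊ R` be nonempty and let `U'` be the set of vertices of `U` within distance `β` of `R'`.
If `U' = U`, some vertex of `R \ R'` is already within `β` of `R'`. Otherwise `s`-connectivity
of `U` gives `u ∈ U'` and `v ∈ U \ U'` at distance at most `s`; the vertex of `R` dominating `v`
is not in `R'`, and the path `R' → u → v → R \ R'` has length at most `β + s + β`.
-/

section

variable {V : Type*} (G : SimpleGraph V)

lemma sdist_le_iff (A B : Set V) (n : ℕ) :
    sdist G A B ≤ n ↔ ∃ a ∈ A, ∃ b ∈ B, G.edist a b ≤ n := by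
  constructor
  · intro h
    by_contra! hfar
    have hge : (n : ℕ∞) + 1 ≤ sdist G A B :=
      le_iInf₂ fun a ha => le_iInf₂ fun b hb => Order.add_one_le_of_lt (hfar a ha b hb)
    exact ((ENat.add_one_le_iff (ENat.natCast_ne_top n)).mp (hge.trans h)).false
  · rintro ⟨a, ha, b, hb, hab⟩
    exact (iInf₂_le a ha).trans ((iInf₂_le b hb).trans hab)

lemma sConnected_of_dominating {s β : ℕ} {U R : Set V} (hU : sConnected G s U) (hRU : R ⊆ U)
    (hdom : ∀ u ∈ U, ∃ r ∈ R, G.edist u r ≤ β) :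
    sConnected G (s + 2 * β) R := by
  intro R' hR'R hR'ne hR'ne'
  obtain ⟨r₀, hr₀⟩ : (R \ R').Nonempty :=
    Set.sdiff_nonempty.mpr fun h => hR'ne' (hR'R.antisymm h)
  rw [sdist_le_iff]
  set U' : Set V := {u | u ∈ U ∧ ∃ r' ∈ R', G.edist u r' ≤ β}
  by_cases hU'U : U' = U
  · obtain ⟨-, r', hr', hd⟩ : r₀ ∈ U' := hU'U ▸ hRU hr₀.1
    refine ⟨r', hr', r₀, hr₀, ?_⟩
    rw [G.edist_comm]
    exact hd.trans (by exact_mod_cast (by omega : β ≤ s + 2 * β))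
  · have hR'U' : R' ⊆ U' := fun r' hr' => ⟨hRU (hR'R hr'), r', hr', by simp⟩
    obtain ⟨u, ⟨-, r', hr', hur'⟩, v, hv, huv⟩ :=
      (sdist_le_iff G _ _ s).mp (hU U' (fun _ h => h.1) (hR'ne.mono hR'U') hU'U)
    obtain ⟨r, hr, hvr⟩ := hdom v hv.1
    have hrR' : r ∉ R' := fun h => hv.2 ⟨hv.1, r, h, hvr⟩
    refine ⟨r', hr', r, ⟨hr, hrR'⟩, ?_⟩
    calc G.edist r' r ≤ G.edist r' u + (G.edist u v + G.edist v r) :=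
          G.edist_triangle.trans (add_le_add_right G.edist_triangle _)
      _ ≤ β + (s + β) := by
          rw [G.edist_comm] at hur'
          gcongr
      _ = ((s + 2 * β : ℕ) : ℕ∞) := by push_cast; ring

end

theorem rulingSet_connected_general {V : Type*} (H : SimpleGraph V)
    (α s β : ℕ)
    (U : Set V) (hUconn : sConnected H s U)
    (R : Set V) (hRU : R ⊆ U)
    (hRind : Indep H α R)
    (hRdom : ∀ u ∈ U, ∃ r ∈ R, H.edist u r ≤ (β : ℕ∞)) :
    Indep H α R ∧ sConnected H (s + 2 * β) R :=
  ⟨hRind, sConnected_of_dominating H hUconn hRU hRdom⟩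

/-- **Ruling set of an `s`-connected component.** If `U` is a nonempty `s`-connected set of
vertices of `H` and `R ⊆ U` is an `(α,β)`-ruling set of `U` with respect to distances in `H`
(`α, s ≥ 1` and `β ≥ α - 1`), then `R` is `α`-independent and `(s + 2β)`-connected in `H`. -/
theorem rulingSet_connected {V : Type*} [Fintype V] (H : SimpleGraph V)
    (α s β : ℕ) (hα : 1 ≤ α) (hs : 1 ≤ s) (hβ : α ≤ β + 1)
    (U : Set V) (hUne : U.Nonempty) (hUconn : sConnected H s U)
    (R : Set V) (hRU : R ⊆ U)
    (hRind : Indep H α R)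
    (hRdom : ∀ u ∈ U, ∃ r ∈ R, H.edist u r ≤ (β : ℕ∞)) :
    Indep H α R ∧ sConnected H (s + 2 * β) R :=
  rulingSet_connected_general H α s β U hUconn R hRU hRind hRdom
end

section
/- Let H be a finite simple graph, let s ≥ 1 be an integer and t ≥ 1 a real number. Let C be an s-connected finite set of vertices of H with |C| ≥ t·B₄, where B₄ := max over v ∈ C of the number of vertices u of H with dist_H(u,v) ≤ 4 (including v itself). Then there exists a subset U ⊆ C that is 5-independent in H, (s+8)-connected in H, and satisfies |U| ≥ t. -/
open scoped ENNReal

/-! A maximum `(r+1)`-independent subset `U` of `C` is `r`-dominating in `C`. So `C` is covered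
by the `|U|` balls of radius `r` around `U`, which bounds `|U|` from below. For `∅ ≠ S' ⊊ U`, split
`C` into the vertices within `r` of `S'` and the rest: a path of length `≤ s` between the two parts
extends by `r` at both ends to a path of length `≤ s + 2r` from `S'` to `U \ S'`. -/

section

variable {V : Type*} (G : SimpleGraph V)

lemma exists_edist_le_of_sdist_le {A B : Set V} {n : ℕ} (h : sdist G A B ≤ n) :
    ∃ a ∈ A, ∃ b ∈ B, G.edist a b ≤ n := by
  by_contra! hc
  have : (n : ℕ∞) + 1 ≤ n :=
    (le_iInf₂ fun a ha => le_iInf₂ fun b hb => Order.add_one_le_of_lt (hc a ha b hb)).trans h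
  exact absurd (by exact_mod_cast this : n + 1 ≤ n) (Nat.not_succ_le_self n)

lemma sdist_le_edist {A B : Set V} {a b : V} (ha : a ∈ A) (hb : b ∈ B) :
    sdist G A B ≤ G.edist a b :=
  (iInf₂_le a ha).trans (iInf₂_le b hb)

lemma Indep.insert {α : ℕ} {S : Set V} {c : V} (hS : Indep G α S)
    (hc : ∀ u ∈ S, (α : ℕ∞) ≤ G.edist c u) : Indep G α (insert c S) := by
  rintro x (rfl | hx) y (rfl | hy) hxy
  · exact absurd rfl hxy
  · exact hc y hy
  · exact G.edist_comm ▸ hc x hx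
  · exact hS x hx y hy hxy

lemma exists_indep_subset_forall_edist_le (C : Finset V) (r : ℕ) :
    ∃ U ⊆ C, Indep G (r + 1) (U : Set V) ∧ ∀ c ∈ C, ∃ u ∈ U, G.edist c u ≤ r := by
  classical
  obtain ⟨U, hU, hUmax⟩ :=
    (C.powerset.filter fun U : Finset V => Indep G (r + 1) (U : Set V)).exists_max_image
      Finset.card ⟨∅, by simp [Indep]⟩
  rw [Finset.mem_filter, Finset.mem_powerset] at hU
  refine ⟨U, hU.1, hU.2, fun c hc => ?_⟩
  by_cases hcU : c ∈ U
  · exact ⟨c, hcU, by simp⟩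
  by_contra! hfar
  have hins : insert c U ∈ C.powerset.filter fun U : Finset V => Indep G (r + 1) (U : Set V) := by
    rw [Finset.mem_filter, Finset.mem_powerset, Finset.coe_insert]
    exact ⟨Finset.insert_subset hc hU.1,
      hU.2.insert G fun u hu => by exact_mod_cast Order.add_one_le_of_lt (hfar u hu)⟩
  have := hUmax _ hins
  rw [Finset.card_insert_of_notMem hcU] at this
  omega

lemma sConnected.of_forall_edist_le {s r : ℕ} {C U : Set V} (hC : sConnected G s C) (hUC : U ⊆ C)
    (hcov : ∀ c ∈ C, ∃ u ∈ U, G.edist c u ≤ r) : sConnected G (s + 2 * r) U := by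
  intro S' hS'U hS'ne hS'ne'
  obtain ⟨w, hwU, hwS'⟩ : ∃ w ∈ U, w ∉ S' := Set.exists_of_ssubset (hS'U.ssubset_of_ne hS'ne')
  have hdist : ∀ {u' u : V}, u' ∈ S' → u ∈ U → u ∉ S' → G.edist u' u ≤ ↑(s + 2 * r) →
      sdist G S' (U \ S') ≤ ↑(s + 2 * r) :=
    fun {_ u} hu' hu huS' h => (sdist_le_edist G hu' (show u ∈ U \ S' from ⟨hu, huS'⟩)).trans h
  let A : Set V := {c ∈ C | ∃ u' ∈ S', G.edist c u' ≤ r}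
  by_cases hAC : A = C
  · -- `w` itself is close to `S'`
    obtain ⟨-, u', hu'S', hwu'⟩ : w ∈ A := hAC ▸ hUC hwU
    refine hdist hu'S' hwU hwS' ((G.edist_comm ▸ hwu').trans ?_)
    exact_mod_cast (by omega : r ≤ s + 2 * r)
  obtain ⟨u₀, hu₀⟩ := hS'ne
  have hAne : A.Nonempty := ⟨u₀, hUC (hS'U hu₀), u₀, hu₀, by simp⟩
  obtain ⟨a, ⟨-, u', hu'S', hau'⟩, b, ⟨hbC, hbA⟩, hab⟩ :=
    exists_edist_le_of_sdist_le G (hC A (fun _ hx => hx.1) hAne hAC)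
  obtain ⟨u, huU, hbu⟩ := hcov b hbC
  refine hdist hu'S' huU (fun huS' => hbA ⟨hbC, u, huS', hbu⟩) ?_
  calc G.edist u' u ≤ G.edist u' a + G.edist a b + G.edist b u :=
        G.edist_triangle.trans (add_le_add_left G.edist_triangle _)
    _ ≤ r + s + r := add_le_add (add_le_add (G.edist_comm ▸ hau') hab) hbu
    _ = ↑(s + 2 * r) := by push_cast; ring

lemma card_le_card_mul_of_forall_edist_le [Fintype V] {C U : Finset V} {r B : ℕ}
    (hcov : ∀ c ∈ C, ∃ u ∈ U, G.edist c u ≤ r)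
    (hball : ∀ u ∈ U, {x | G.edist x u ≤ r}.ncard ≤ B) : C.card ≤ U.card * B := by
  classical
  calc C.card ≤ (U.biUnion fun u => {x | G.edist x u ≤ r}.toFinset).card := by
        refine Finset.card_le_card fun c hc => ?_
        obtain ⟨u, hu, hcu⟩ := hcov c hc
        exact Finset.mem_biUnion.2 ⟨u, hu, by simpa using hcu⟩
    _ ≤ ∑ u ∈ U, {x | G.edist x u ≤ r}.toFinset.card := Finset.card_biUnion_le
    _ ≤ ∑ _u ∈ U, B := Finset.sum_le_sum fun u hu => by
        rw [← Set.ncard_eq_toFinset_card']; exact hball u hu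
    _ = U.card * B := by rw [Finset.sum_const, smul_eq_mul]

lemma one_le_ncard_edist_le [Finite V] (v : V) (r : ℕ∞) : 1 ≤ {x | G.edist x v ≤ r}.ncard :=
  (Set.ncard_pos (Set.toFinite _)).2 ⟨v, by simp⟩

end

theorem large_independent_connected_subset_general {V : Type*} [Fintype V]
    (H : SimpleGraph V) (s : ℕ) (t : ℝ)
    (C : Finset V) (hCne : C.Nonempty) (hCconn : sConnected H s (C : Set V))
    (B4 : ℕ) (hB4 : B4 = C.sup (fun v => Set.ncard {u : V | H.edist u v ≤ (4 : ℕ∞)}))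
    (hsize : t * (B4 : ℝ) ≤ (C.card : ℝ)) :
    ∃ U : Finset V, U ⊆ C ∧ Indep H 5 (U : Set V) ∧
      sConnected H (s + 8) (U : Set V) ∧ t ≤ (U.card : ℝ) := by
  obtain ⟨U, hUC, hUindep, hcov⟩ := exists_indep_subset_forall_edist_le H C 4
  have hball : ∀ v ∈ C, {u : V | H.edist u v ≤ (4 : ℕ)}.ncard ≤ B4 := fun v hv =>
    hB4 ▸ Finset.le_sup (f := fun v => Set.ncard {u : V | H.edist u v ≤ (4 : ℕ∞)}) hv
  have hB4pos : (0 : ℝ) < B4 := by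
    obtain ⟨v, hv⟩ := hCne
    exact_mod_cast (one_le_ncard_edist_le H v 4).trans (hball v hv)
  have hcard : C.card ≤ U.card * B4 :=
    card_le_card_mul_of_forall_edist_le H hcov fun u hu => hball u (hUC hu)
  refine ⟨U, hUC, hUindep, hCconn.of_forall_edist_le H (Finset.coe_subset.2 hUC) hcov, ?_⟩
  refine le_of_mul_le_mul_right (hsize.trans ?_) hB4pos
  exact_mod_cast hcard

/-- If `C` is an `s`-connected set with `|C| ≥ t·B₄`, where `B₄` is the maximum over `v ∈ C`
of the number of vertices within distance `4` of `v` (including `v` itself), then there is a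
subset `U ⊆ C` that is `5`-independent, `(s+8)`-connected, and has size at least `t`. -/
theorem large_independent_connected_subset {V : Type*} [Fintype V] [DecidableEq V]
    (H : SimpleGraph V) (s : ℕ) (hs : 1 ≤ s) (t : ℝ) (ht : 1 ≤ t)
    (C : Finset V) (hCne : C.Nonempty) (hCconn : sConnected H s (C : Set V))
    (B4 : ℕ) (hB4 : B4 = C.sup (fun v => Set.ncard {u : V | H.edist u v ≤ (4 : ℕ∞)}))
    (hsize : t * (B4 : ℝ) ≤ (C.card : ℝ)) :
    ∃ U : Finset V, U ⊆ C ∧ Indep H 5 (U : Set V) ∧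
      sConnected H (s + 8) (U : Set V) ∧ t ≤ (U.card : ℝ) :=
  large_independent_connected_subset_general H s t C hCne hCconn B4 hB4 hsize
end

section
/- Let K be a finite simple graph with n vertices and maximum degree at most D, where D ≥ 1, and let t ≥ 1 be an integer. Then the number of t-element vertex subsets U of K such that the induced subgraph K[U] is connected is at most 4^t · n · D^{t−1}. -/
/-!
Root a spanning tree of a connected set `U` at a vertex `v ∈ U` and store it in
left-child/right-sibling form: a binary tree with `#U - 1` nodes, each labelled by the position
(`< D`) of a tree child in the neighbour list of its tree parent. Given `v`, such a labelled tree
determines `U`, so there are at most `n · catalan (t - 1) · D ^ (t - 1)` connected `t`-sets, and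
`catalan m ≤ 4 ^ m`. The tree is built by induction on `#U`: delete a vertex whose removal leaves
`U` connected, and graft it back as a leaf below one of its neighbours.
-/

namespace BinaryTree

variable {α β : Type*}

def labels : BinaryTree α → List α
  | nil => []
  | node a l r => a :: (labels l ++ labels r)

@[simp]
lemma length_labels (T : BinaryTree α) : T.labels.length = T.numNodes := by
  induction T with
  | nil => rfl
  | node a l r hl hr => simp [labels, numNodes, hl, hr]

@[simp]
lemma numNodes_map (f : α → β) (T : BinaryTree α) : (T.map f).numNodes = T.numNodes := by
  induction T with
  | nil => rfl
  | node a l r hl hr => simp [map, numNodes, hl, hr]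

lemma shape_labels_injective :
    Function.Injective fun T : BinaryTree α => (T.map fun _ => (), T.labels) := by
  intro T T' h
  induction T generalizing T' with
  | nil => cases T' <;> simp_all [map]
  | node a l r hl hr =>
    cases T' with
    | nil => simp [map] at h
    | node a' l' r' =>
      simp only [map, labels, Prod.mk.injEq, node.injEq, List.cons.injEq] at h
      obtain ⟨⟨-, hsl, hsr⟩, rfl, hlr⟩ := h
      have hlen : l.labels.length = l'.labels.length := by
        rw [length_labels, length_labels, ← numNodes_map (fun _ => ()), hsl, numNodes_map]
      obtain ⟨hll, hrr⟩ := List.append_inj hlr hlen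
      rw [hl (Prod.ext hsl hll), hr (Prod.ext hsr hrr)]

lemma mapsTo_shape_labels (m : ℕ) :
    Set.MapsTo (fun T : BinaryTree α => (T.map fun _ => (), T.labels))
      {T | T.numNodes = m} (↑(treesOfNumNodesEq m) ×ˢ {L | L.length = m}) := by
  intro T hT
  simp_all

lemma finite_setOf_numNodes_eq [Finite α] (m : ℕ) :
    {T : BinaryTree α | T.numNodes = m}.Finite :=
  .of_injOn (mapsTo_shape_labels m) shape_labels_injective.injOn
    ((treesOfNumNodesEq m).finite_toSet.prod (List.finite_length_eq α m))

end BinaryTree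

lemma List.ncard_length_eq (α : Type*) [Fintype α] (m : ℕ) :
    {L : List α | L.length = m}.ncard = Fintype.card α ^ m := by
  rw [← Nat.card_coe_set_eq]
  exact (Nat.card_eq_fintype_card (α := List.Vector α m)).trans (card_vector m)

lemma BinaryTree.ncard_setOf_numNodes_eq_le {α : Type*} [Fintype α] (m : ℕ) :
    {T : BinaryTree α | T.numNodes = m}.ncard ≤ catalan m * Fintype.card α ^ m :=
  calc {T : BinaryTree α | T.numNodes = m}.ncard
      ≤ (↑(treesOfNumNodesEq m) ×ˢ {L : List α | L.length = m}).ncard :=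
        Set.ncard_le_ncard_of_injOn _ (fun _ hT => mapsTo_shape_labels m hT)
          shape_labels_injective.injOn
          ((treesOfNumNodesEq m).finite_toSet.prod (List.finite_length_eq α m))
    _ = catalan m * Fintype.card α ^ m := by
        rw [Set.ncard_prod, Set.ncard_coe_finset, treesOfNumNodesEq_card_eq_catalan,
          List.ncard_length_eq]

lemma catalan_le_four_pow (n : ℕ) : catalan n ≤ 4 ^ n :=
  calc catalan n ≤ (n + 1) * catalan n := Nat.le_mul_of_pos_left _ n.succ_pos
    _ = n.centralBinom := succ_mul_catalan_eq_centralBinom n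
    _ ≤ 4 ^ n := n.centralBinom_le_four_pow

namespace SimpleGraph

variable {V : Type*}

lemma Connected.exists_adj_connected_induce_erase [DecidableEq V] {G : SimpleGraph V}
    {U : Finset V} (hU : (G.induce (U : Set V)).Connected) (hcard : 1 < U.card) :
    ∃ u ∈ U, ∃ w ∈ U.erase u, G.Adj w u ∧ (G.induce (U.erase u : Set V)).Connected := by
  have : Nontrivial (U : Set V) := Finset.one_lt_card_iff_nontrivial.mp hcard |>.coe_sort
  obtain ⟨u, hu⟩ := hU.exists_connected_induce_compl_singleton_of_finite_nontrivial
  obtain ⟨w, hw⟩ := hU.preconnected.exists_adj_of_nontrivial u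
  refine ⟨u, u.2, w, Finset.mem_erase.mpr ⟨fun h => hw.ne (Subtype.ext h.symm), w.2⟩,
    hw.symm, ?_⟩
  refine hu.map (induceHom (Embedding.induce _).toHom ?_) ?_
  · rintro x hx
    exact Finset.mem_erase.mpr ⟨fun h => hx (Subtype.ext h), x.2⟩
  · rintro ⟨x, hx⟩
    obtain ⟨hxu, hxU⟩ := Finset.mem_erase.mp hx
    exact ⟨⟨⟨x, hxU⟩, fun h => hxu (congrArg Subtype.val h)⟩, rfl⟩

section treeSpan

variable (G : SimpleGraph V) [G.LocallyFinite]

noncomputable def nthNeighbor (v : V) (k : ℕ) : V := (G.neighborFinset v).toList.getD k v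

lemma exists_lt_degree_nthNeighbor_eq {v u : V} (h : G.Adj v u) :
    ∃ k < G.degree v, G.nthNeighbor v k = u := by
  obtain ⟨k, hk, rfl⟩ :=
    List.mem_iff_getElem.mp (Finset.mem_toList.mpr ((G.mem_neighborFinset v u).mpr h))
  exact ⟨k, by simpa using hk, List.getD_eq_getElem _ _ hk⟩

variable [DecidableEq V] {D : ℕ}

/-- Left-child/right-sibling reading of a labelled binary tree hanging from `v`: the root label
selects a child `c` of `v`, the left subtree spans the branch below `c`, and the right subtree the
remaining branches at `v`. -/
noncomputable def treeSpan : BinaryTree (Fin D) → V → Finset V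
  | .nil, v => {v}
  | .node k l r, v => treeSpan l (G.nthNeighbor v k) ∪ treeSpan r v

lemma exists_treeSpan_eq_insert (hdeg : ∀ v, G.degree v ≤ D) {w u : V} (hadj : G.Adj w u)
    (T : BinaryTree (Fin D)) {v : V} (hw : w ∈ G.treeSpan T v) :
    ∃ T' : BinaryTree (Fin D), T'.numNodes = T.numNodes + 1 ∧
      G.treeSpan T' v = insert u (G.treeSpan T v) := by
  induction T generalizing v with
  | nil =>
    obtain rfl : w = v := Finset.mem_singleton.mp hw
    obtain ⟨k, hk, hku⟩ := G.exists_lt_degree_nthNeighbor_eq hadj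
    refine ⟨.node ⟨k, hk.trans_le (hdeg w)⟩ .nil .nil, rfl, ?_⟩
    rw [← Finset.singleton_union]
    simp only [treeSpan, hku]
  | node k l r hl hr =>
    rcases Finset.mem_union.mp hw with hw | hw
    · obtain ⟨l', hl'n, hl's⟩ := hl hw
      refine ⟨.node k l' r, ?_, by simp [treeSpan, hl's, Finset.insert_union]⟩
      simp only [BinaryTree.numNodes, hl'n]
      omega
    · obtain ⟨r', hr'n, hr's⟩ := hr hw
      refine ⟨.node k l r', ?_, by simp [treeSpan, hr's, Finset.union_insert]⟩
      simp only [BinaryTree.numNodes, hr'n]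
      omega

end treeSpan

lemma Connected.exists_treeSpan_eq [DecidableEq V] {G : SimpleGraph V} [G.LocallyFinite]
    {D : ℕ} (hdeg : ∀ v, G.degree v ≤ D) {U : Finset V}
    (hU : (G.induce (U : Set V)).Connected) :
    ∃ v, ∃ T : BinaryTree (Fin D), T.numNodes = U.card - 1 ∧ G.treeSpan T v = U := by
  induction U using Finset.strongInduction with
  | _ U ih =>
  obtain hcard | hcard := le_or_gt U.card 1
  · obtain ⟨⟨v, hv⟩⟩ := hU.nonempty
    obtain ⟨v', rfl⟩ := Finset.card_eq_one.mp (le_antisymm hcard (Finset.card_pos.mpr ⟨v, hv⟩))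
    exact ⟨v', .nil, rfl, rfl⟩
  · obtain ⟨u, hu, w, hw, hwu, hU'⟩ := hU.exists_adj_connected_induce_erase hcard
    obtain ⟨v, T, hTn, hTs⟩ := ih _ (Finset.erase_ssubset hu) hU'
    obtain ⟨T', hT'n, hT's⟩ := G.exists_treeSpan_eq_insert hdeg hwu T (hTs ▸ hw)
    refine ⟨v, T', ?_, by rw [hT's, hTs, Finset.insert_erase hu]⟩
    rw [hT'n, hTn, Finset.card_erase_of_mem hu]
    omega

end SimpleGraph

theorem count_connected_subsets_general {V : Type*} [Fintype V] [DecidableEq V]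
    (K : SimpleGraph V) [DecidableRel K.Adj]
    (n D t : ℕ) (hn : Fintype.card V = n)
    (hdeg : ∀ v : V, K.degree v ≤ D) :
    Set.ncard {U : Finset V | U.card = t ∧ (K.induce (U : Set V)).Connected}
      ≤ 4 ^ t * n * D ^ (t - 1) := by
  set trees := {T : BinaryTree (Fin D) | T.numNodes = t - 1}
  have hfin : (Set.univ ×ˢ trees : Set (V × BinaryTree (Fin D))).Finite :=
    Set.finite_univ.prod (BinaryTree.finite_setOf_numNodes_eq (t - 1))
  have hspan : {U : Finset V | U.card = t ∧ (K.induce (U : Set V)).Connected} ⊆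
      (fun p : V × BinaryTree (Fin D) => K.treeSpan p.2 p.1) '' (Set.univ ×ˢ trees) := by
    rintro U ⟨rfl, hU⟩
    obtain ⟨v, T, hT, hTU⟩ := hU.exists_treeSpan_eq hdeg
    exact ⟨(v, T), ⟨trivial, hT⟩, hTU⟩
  calc _ ≤ (Set.univ ×ˢ trees).ncard :=
        (Set.ncard_le_ncard hspan (hfin.image _)).trans (Set.ncard_image_le hfin)
    _ = n * trees.ncard := by rw [Set.ncard_prod, Set.ncard_univ, Nat.card_eq_fintype_card, hn]
    _ ≤ n * (catalan (t - 1) * D ^ (t - 1)) := by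
        simpa using Nat.mul_le_mul_left n (BinaryTree.ncard_setOf_numNodes_eq_le (α := Fin D) _)
    _ ≤ n * (4 ^ t * D ^ (t - 1)) := by
        gcongr
        exact (catalan_le_four_pow _).trans (Nat.pow_le_pow_right (by norm_num) (Nat.sub_le t 1))
    _ = 4 ^ t * n * D ^ (t - 1) := by ring

/-- **Counting connected subsets.** In a graph `K` on `n` vertices with maximum degree at
most `D ≥ 1`, the number of `t`-element vertex subsets `U` (`t ≥ 1`) inducing a connected
subgraph is at most `4^t · n · D^(t-1)`. -/
theorem count_connected_subsets {V : Type*} [Fintype V] [DecidableEq V]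
    (K : SimpleGraph V) [DecidableRel K.Adj]
    (n D t : ℕ) (hn : Fintype.card V = n) (hD : 1 ≤ D) (ht : 1 ≤ t)
    (hdeg : ∀ v : V, K.degree v ≤ D) :
    Set.ncard {U : Finset V | U.card = t ∧ (K.induce (U : Set V)).Connected}
      ≤ 4 ^ t * n * D ^ (t - 1) :=
  count_connected_subsets_general K n D t hn hdeg
end

section
/- Let n ≥ 3 and i ≥ 1 be integers and let Δ_A > 0 be a real number with 24·2^i·ln n ≤ Δ_A. Let S be a finite index set with |S| ≤ Δ_A / 2^{i−1}, and let (X_w)_{w∈S} be {0,1}-valued random variables, each satisfying P(X_w = 1) = 24·2^i·ln n / Δ_A, that are p-wise independent for some integer p ≥ 8·ln n. Then P( Σ_{w∈S} X_w ≥ 72·ln n ) ≤ n^{−3}. -/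
/-!
Moment method. Put `Y w = X w - q`, where `q = 24·2^i·ln n / Δ_A`, and take an even `k ≤ 8 ln n`,
so that `k ≤ p`. The expansion of `(∑ Y)^k` only involves products of at most `k` of the `Y w`,
so its expectation is the same as for independent copies of the `Y w`. For those,
`z^k ≤ (k / (e L))^k (e^{Lz} + e^{-Lz})` and the Bernoulli bound `E e^{s Y w} ≤ e^{q (e^s - 1 - s)}`
give `E (∑ Y)^k ≤ 2 (k / (e L))^k e^{|S| q (e^L - 1 - L)}`. As `|S| q ≤ 48 ln n`, the event
`∑ X ≥ 72 ln n` forces `∑ Y ≥ 24 ln n`, and Markov's inequality with `L = 1/3` gives `n^{-3}`.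
-/

open MeasureTheory
open scoped ProbabilityTheory ENNReal

def PwiseIndep {Ω ι : Type*} [MeasurableSpace Ω] (μ : Measure Ω) (p : ℕ)
    (X : ι → Ω → ℝ) : Prop :=
  ∀ J : Finset ι, J.card ≤ p →
    ProbabilityTheory.iIndepFun (fun j : J => X j) μ

open ProbabilityTheory Finset Real

lemma abs_sum_le_card_mul {ι : Type*} [Fintype ι] {f : ι → ℝ} {C : ℝ} (hf : ∀ i, |f i| ≤ C) :
    |∑ i, f i| ≤ Fintype.card ι * C :=
  (abs_sum_le_sum_abs _ _).trans ((sum_le_sum fun i _ => hf i).trans (by simp))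

lemma exp_neg_sub_one_sub_neg_le {L : ℝ} (hL : 0 ≤ L) : exp (-L) - 1 - -L ≤ exp L - 1 - L := by
  have := self_le_sinh_iff.mpr hL
  rw [sinh_eq] at this
  linarith

lemma pow_le_div_exp_one_pow_mul_exp (k : ℕ) {u : ℝ} (hu : 0 ≤ u) :
    u ^ k ≤ (k / exp 1) ^ k * exp u := by
  rcases k.eq_zero_or_pos with rfl | hk
  · simpa using hu
  have hk' : (0 : ℝ) < k := by exact_mod_cast hk
  have hratio : u / k ≤ exp (u / k - 1) := by linarith [add_one_le_exp (u / k - 1)]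
  calc u ^ k = (k : ℝ) ^ k * (u / k) ^ k := by rw [← mul_pow, mul_div_cancel₀ _ hk'.ne']
    _ ≤ (k : ℝ) ^ k * exp (u / k - 1) ^ k := by gcongr
    _ = (k / exp 1) ^ k * exp u := by
      rw [← exp_nat_mul, mul_sub, mul_div_cancel₀ _ hk'.ne', exp_sub, div_pow, ← exp_nat_mul]
      ring_nf

lemma pow_le_mul_exp_add_exp {k : ℕ} (hk : Even k) {L : ℝ} (hL : 0 < L) (z : ℝ) :
    z ^ k ≤ (k / (exp 1 * L)) ^ k * (exp (L * z) + exp (-L * z)) := by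
  have hexp : exp (L * |z|) ≤ exp (L * z) + exp (-L * z) := by
    rcases abs_choice z with h | h <;> rw [h] <;> simp only [mul_neg, neg_mul] <;>
      linarith [exp_pos (L * z), exp_pos (-(L * z))]
  calc z ^ k = (L * |z|) ^ k / L ^ k := by
        rw [mul_pow, hk.pow_abs, mul_div_cancel_left₀ _ (pow_pos hL k).ne']
    _ ≤ (k / exp 1) ^ k * exp (L * |z|) / L ^ k := by
        gcongr; exact pow_le_div_exp_one_pow_mul_exp k (by positivity)
    _ ≤ (k / exp 1) ^ k * (exp (L * z) + exp (-L * z)) / L ^ k := by gcongr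
    _ = (k / (exp 1 * L)) ^ k * (exp (L * z) + exp (-L * z)) := by
        rw [div_mul_eq_div_div, div_pow _ L]; ring

section Moments

variable {Ω : Type*} [MeasurableSpace Ω] {μ : Measure Ω}

lemma integrable_comp_of_abs_le [IsFiniteMeasure μ] {W : Ω → ℝ} (hW : Measurable W) {C : ℝ}
    (hWC : ∀ ω, |W ω| ≤ C) {g : ℝ → ℝ} (hg : Continuous g) :
    Integrable (fun ω => g (W ω)) μ := by
  obtain ⟨M, hM⟩ := (isCompact_Icc (a := -C) (b := C)).exists_bound_of_continuousOn hg.continuousOn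
  exact .of_bound (hg.measurable.comp hW).aestronglyMeasurable M
    (ae_of_all _ fun ω => hM _ (abs_le.mp (hWC ω)))

lemma integrable_prod_comp_of_abs_le [IsFiniteMeasure μ] {ι κ : Type*} [Fintype κ]
    {X : ι → Ω → ℝ} {C : ℝ} (hXm : ∀ i, AEStronglyMeasurable (X i) μ)
    (hXC : ∀ i ω, |X i ω| ≤ C) (f : κ → ι) :
    Integrable (fun ω => ∏ j, X (f j) ω) μ :=
  .of_bound (aestronglyMeasurable_fun_prod _ fun j _ => hXm (f j)) (C ^ Fintype.card κ)
    (ae_of_all _ fun ω => by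
      rw [Real.norm_eq_abs, abs_prod, ← card_univ, ← prod_const]
      exact prod_le_prod (fun _ _ => abs_nonneg _) fun j _ => hXC (f j) ω)

lemma measureReal_ge_le_integral_pow_div [IsFiniteMeasure μ] {k : ℕ} (hk : Even k) {a : ℝ}
    (ha : 0 < a) {W : Ω → ℝ} (hWk : Integrable (fun ω => W ω ^ k) μ) :
    μ.real {ω | a ≤ W ω} ≤ (∫ ω, W ω ^ k ∂μ) / a ^ k := by
  have hsub : {ω | a ≤ W ω} ⊆ {ω | a ^ k ≤ W ω ^ k} := fun ω (h : a ≤ W ω) =>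
    pow_le_pow_left₀ ha.le h k
  rw [le_div_iff₀ (pow_pos ha k), mul_comm]
  calc a ^ k * μ.real {ω | a ≤ W ω} ≤ a ^ k * μ.real {ω | a ^ k ≤ W ω ^ k} :=
        mul_le_mul_of_nonneg_left (measureReal_mono hsub) (by positivity)
    _ ≤ ∫ ω, W ω ^ k ∂μ :=
        mul_meas_ge_le_integral_of_nonneg (ae_of_all _ fun ω => hk.pow_nonneg _) hWk _

lemma integral_pow_le_mgf_add_mgf {k : ℕ} (hk : Even k) {L : ℝ} (hL : 0 < L)
    {W : Ω → ℝ} (hWk : Integrable (fun ω => W ω ^ k) μ)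
    (hpos : Integrable (fun ω => exp (L * W ω)) μ) (hneg : Integrable (fun ω => exp (-L * W ω)) μ) :
    ∫ ω, W ω ^ k ∂μ ≤ (k / (exp 1 * L)) ^ k * (mgf W μ L + mgf W μ (-L)) := by
  rw [mgf, mgf, ← integral_add hpos hneg, ← integral_const_mul]
  exact integral_mono hWk ((hpos.add hneg).const_mul _) fun ω => pow_le_mul_exp_add_exp hk hL (W ω)

lemma integral_eq_measureReal_of_eq_zero_or_one {X : Ω → ℝ} (hXm : Measurable X)
    (hX01 : ∀ ω, X ω = 0 ∨ X ω = 1) : ∫ ω, X ω ∂μ = μ.real {ω | X ω = 1} := by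
  have hX : X = Set.indicator {ω | X ω = 1} 1 := by
    funext ω
    rcases hX01 ω with h | h <;> simp [h]
  conv_lhs => rw [hX]
  exact integral_indicator_one (hXm (measurableSet_singleton 1))

lemma mgf_sub_le_exp [IsProbabilityMeasure μ] {X : Ω → ℝ} (hXm : Measurable X)
    (hX01 : ∀ ω, X ω = 0 ∨ X ω = 1) {q : ℝ} (hq : ∫ ω, X ω ∂μ = q) (s : ℝ) :
    mgf (fun ω => X ω - q) μ s ≤ exp (q * (exp s - 1 - s)) := by
  have hX : Integrable X μ := .of_bound hXm.aestronglyMeasurable 1 (ae_of_all _ fun ω => by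
    rcases hX01 ω with h | h <;> simp [h])
  have hlin : ∀ ω, exp (s * (X ω - q)) = exp (-(s * q)) * (1 + (exp s - 1) * X ω) := by
    intro ω
    rcases hX01 ω with h | h <;> simp [h, mul_sub, exp_sub, div_eq_mul_inv, exp_neg, mul_comm]
  calc mgf (fun ω => X ω - q) μ s = exp (-(s * q)) * (1 + (exp s - 1) * q) := by
        simp only [mgf, hlin]
        rw [integral_const_mul, integral_add (integrable_const 1) (hX.const_mul _),
          integral_const_mul, hq]
        simp
    _ ≤ exp (-(s * q)) * exp ((exp s - 1) * q) := by
        gcongr; linarith [add_one_le_exp ((exp s - 1) * q)]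
    _ = exp (q * (exp s - 1 - s)) := by rw [← exp_add]; ring_nf

end Moments

section PwiseIndep

variable {Ω Ω' ι : Type*} [MeasurableSpace Ω] [MeasurableSpace Ω'] {μ : Measure Ω}
  {ν : Measure Ω'} {p k : ℕ}

lemma PwiseIndep.mono {X : ι → Ω → ℝ} (hX : PwiseIndep μ p X) (hkp : k ≤ p) :
    PwiseIndep μ k X :=
  fun J hJ => hX J (hJ.trans hkp)

lemma PwiseIndep.comp {X : ι → Ω → ℝ} (hX : PwiseIndep μ p X) (g : ι → ℝ → ℝ)
    (hg : ∀ i, Measurable (g i)) : PwiseIndep μ p (fun i ω => g i (X i ω)) :=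
  fun J hJ => (hX J hJ).comp (fun j => g j) fun j => hg j

lemma ProbabilityTheory.iIndepFun.pwiseIndep {X : ι → Ω → ℝ} (hX : iIndepFun X μ) :
    PwiseIndep μ p X :=
  fun _ _ => hX.precomp Subtype.val_injective

lemma integral_prod_comp_eq_prod_integral_pow [DecidableEq ι] {κ : Type*} [Fintype κ]
    {X : ι → Ω → ℝ} (f : κ → ι) (hX : iIndepFun (fun w : univ.image f => X w) μ)
    (hXm : ∀ i, AEMeasurable (X i) μ) :
    ∫ ω, ∏ j, X (f j) ω ∂μ = ∏ w ∈ univ.image f, ∫ ω, X w ω ^ #{j | f j = w} ∂μ := by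
  have hregroup : ∀ ω, ∏ j, X (f j) ω = ∏ w : univ.image f, X w ω ^ #{j | f j = w} :=
    fun ω => (prod_comp (fun w => X w ω) f).trans (prod_coe_sort _ _).symm
  simp_rw [hregroup, ← prod_coe_sort (univ.image f)]
  exact hX.integral_fun_prod_comp (fun w => hXm w) fun _ => (continuous_pow _).aestronglyMeasurable

theorem PwiseIndep.integral_sum_pow_eq [Fintype ι] [IsFiniteMeasure μ] [IsFiniteMeasure ν]
    {X : ι → Ω → ℝ} {Y : ι → Ω' → ℝ} {C : ℝ}
    (hX : PwiseIndep μ k X) (hY : PwiseIndep ν k Y) (hXY : ∀ i, IdentDistrib (X i) (Y i) μ ν)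
    (hXC : ∀ i ω, |X i ω| ≤ C) (hYC : ∀ i ω, |Y i ω| ≤ C) :
    ∫ ω, (∑ i, X i ω) ^ k ∂μ = ∫ ω, (∑ i, Y i ω) ^ k ∂ν := by
  classical
  have hmoment : ∀ f : Fin k → ι, ∫ ω, ∏ j, X (f j) ω ∂μ = ∫ ω, ∏ j, Y (f j) ω ∂ν := by
    intro f
    have hcard : #(univ.image f) ≤ k := card_image_le.trans (by simp)
    rw [integral_prod_comp_eq_prod_integral_pow f (hX _ hcard) fun i => (hXY i).aemeasurable_fst,
      integral_prod_comp_eq_prod_integral_pow f (hY _ hcard) fun i => (hXY i).aemeasurable_snd]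
    exact prod_congr rfl fun w _ => ((hXY w).comp (measurable_id.pow_const _)).integral_eq
  simp_rw [Finset.sum_pow']
  rw [integral_finsetSum _ fun f _ => integrable_prod_comp_of_abs_le
      (fun i => (hXY i).aemeasurable_fst.aestronglyMeasurable) hXC f,
    integral_finsetSum _ fun f _ => integrable_prod_comp_of_abs_le
      (fun i => (hXY i).aemeasurable_snd.aestronglyMeasurable) hYC f]
  exact sum_congr rfl fun f _ => hmoment f

lemma identDistrib_comp_eval [Fintype ι] [IsProbabilityMeasure μ] {β : Type*} [MeasurableSpace β]
    {Y : Ω → β} (hY : Measurable Y) (i : ι) :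
    IdentDistrib Y (fun ω : ι → Ω => Y (ω i)) μ (Measure.pi fun _ => μ) :=
  ⟨hY.aemeasurable, (hY.comp (measurable_pi_apply i)).aemeasurable, by
    change _ = Measure.map (Y ∘ (Function.eval i : (ι → Ω) → Ω)) _
    rw [← Measure.map_map hY (measurable_pi_apply i), (measurePreserving_eval _ i).map_eq]⟩

theorem PwiseIndep.integral_sum_pow_le [Fintype ι] [IsProbabilityMeasure μ] {Y : ι → Ω → ℝ}
    (hY : PwiseIndep μ k Y) (hYm : ∀ i, Measurable (Y i)) {C : ℝ} (hYC : ∀ i ω, |Y i ω| ≤ C)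
    (hk : Even k) {L : ℝ} (hL : 0 < L) {B : ι → ℝ}
    (hB : ∀ i s, (s = L ∨ s = -L) → mgf (Y i) μ s ≤ B i) :
    ∫ ω, (∑ i, Y i ω) ^ k ∂μ ≤ 2 * (k / (exp 1 * L)) ^ k * ∏ i, B i := by
  set ν := Measure.pi fun _ : ι => μ
  set Z : ι → (ι → Ω) → ℝ := fun i ω => Y i (ω i)
  have hZm : ∀ i, Measurable (Z i) := fun i => (hYm i).comp (measurable_pi_apply i)
  have hZ : iIndepFun Z ν := iIndepFun_pi fun i => (hYm i).aemeasurable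
  have hZsum : Measurable fun ω => ∑ i, Z i ω := Finset.measurable_fun_sum _ fun i _ => hZm i
  have hZC : ∀ ω, |∑ i, Z i ω| ≤ Fintype.card ι * C := fun ω =>
    abs_sum_le_card_mul fun i => hYC i (ω i)
  have hmgf : ∀ s, (s = L ∨ s = -L) → mgf (fun ω => ∑ i, Z i ω) ν s ≤ ∏ i, B i := by
    intro s hs
    rw [← sum_fn, hZ.mgf_sum hZm]
    refine prod_le_prod (fun _ _ => mgf_nonneg) fun i _ => ?_
    rw [← mgf_congr_identDistrib (identDistrib_comp_eval (hYm i) i)]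
    exact hB i s hs
  calc ∫ ω, (∑ i, Y i ω) ^ k ∂μ = ∫ ω, (∑ i, Z i ω) ^ k ∂ν :=
        hY.integral_sum_pow_eq hZ.pwiseIndep (fun i => identDistrib_comp_eval (hYm i) i) hYC
          fun i ω => hYC i (ω i)
    _ ≤ (k / (exp 1 * L)) ^ k * (mgf (fun ω => ∑ i, Z i ω) ν L +
          mgf (fun ω => ∑ i, Z i ω) ν (-L)) :=
        integral_pow_le_mgf_add_mgf hk hL (integrable_comp_of_abs_le hZsum hZC (continuous_pow k))
          (integrable_comp_of_abs_le hZsum hZC (g := fun x => exp (L * x)) (by fun_prop))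
          (integrable_comp_of_abs_le hZsum hZC (g := fun x => exp (-L * x)) (by fun_prop))
    _ ≤ (k / (exp 1 * L)) ^ k * (2 * ∏ i, B i) := by
        gcongr
        linarith [hmgf L (.inl rfl), hmgf (-L) (.inr rfl)]
    _ = 2 * (k / (exp 1 * L)) ^ k * ∏ i, B i := by ring

theorem PwiseIndep.measureReal_sum_sub_ge_le [Fintype ι] [IsProbabilityMeasure μ]
    {X : ι → Ω → ℝ} (hX : PwiseIndep μ k X) (hXm : ∀ i, Measurable (X i))
    (hX01 : ∀ i ω, X i ω = 0 ∨ X i ω = 1) {q : ℝ} (hq : ∀ i, ∫ ω, X i ω ∂μ = q) (hk : Even k)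
    {a L : ℝ} (ha : 0 < a) (hL : 0 < L) :
    μ.real {ω | a ≤ ∑ i, (X i ω - q)} ≤
      2 * (k / (exp 1 * L * a)) ^ k * exp (Fintype.card ι * q * (exp L - 1 - L)) := by
  set Y : ι → Ω → ℝ := fun i ω => X i ω - q
  have hY : PwiseIndep μ k Y := hX.comp (fun _ x => x - q) fun _ => measurable_sub_const q
  have hYm : ∀ i, Measurable (Y i) := fun i => (hXm i).sub_const q
  have hYC : ∀ i ω, |Y i ω| ≤ 1 + |q| := fun i ω =>
    (abs_sub _ _).trans (by rcases hX01 i ω with h | h <;> simp [h])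
  have hmgf : ∀ i s, (s = L ∨ s = -L) → mgf (Y i) μ s ≤ exp (q * (exp L - 1 - L)) := by
    rintro i s (rfl | rfl)
    · exact mgf_sub_le_exp (hXm i) (hX01 i) (hq i) s
    have hq0 : 0 ≤ q := hq i ▸ integral_nonneg fun ω => by rcases hX01 i ω with h | h <;> simp [h]
    refine (mgf_sub_le_exp (hXm i) (hX01 i) (hq i) _).trans (exp_le_exp.mpr ?_)
    exact mul_le_mul_of_nonneg_left (exp_neg_sub_one_sub_neg_le hL.le) hq0
  have hsumC : ∀ ω, |∑ i, Y i ω| ≤ Fintype.card ι * (1 + |q|) := fun ω =>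
    abs_sum_le_card_mul fun i => hYC i ω
  calc μ.real {ω | a ≤ ∑ i, Y i ω} ≤ (∫ ω, (∑ i, Y i ω) ^ k ∂μ) / a ^ k :=
        measureReal_ge_le_integral_pow_div hk ha (integrable_comp_of_abs_le
          (Finset.measurable_fun_sum _ fun i _ => hYm i) hsumC (continuous_pow k))
    _ ≤ (2 * (k / (exp 1 * L)) ^ k * ∏ _i : ι, exp (q * (exp L - 1 - L))) / a ^ k := by
        gcongr
        exact hY.integral_sum_pow_le hYm hYC hk hL hmgf
    _ = 2 * (k / (exp 1 * L * a)) ^ k * exp (Fintype.card ι * q * (exp L - 1 - L)) := by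
        rw [prod_const, card_univ, ← exp_nat_mul, div_mul_eq_div_div _ _ a, div_pow _ a]; ring_nf

end PwiseIndep

lemma mul_div_le_of_le_div_two_pow_pred {c Δ a t : ℝ} {i : ℕ} (hΔ : 0 < Δ) (ha : 0 ≤ a)
    (ht : 0 ≤ t) (hc : c ≤ Δ / 2 ^ (i - 1)) : c * (a * 2 ^ i * t / Δ) ≤ 2 * a * t := by
  have h2 : (2 : ℝ) ^ i ≤ 2 * 2 ^ (i - 1) := by
    rw [← pow_succ']; exact pow_le_pow_right₀ one_le_two (by omega)
  calc c * (a * 2 ^ i * t / Δ) ≤ Δ / 2 ^ (i - 1) * (a * 2 ^ i * t / Δ) := by gcongr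
    _ = a * t * (2 ^ i / 2 ^ (i - 1)) := by field_simp
    _ ≤ a * t * 2 := by gcongr; rwa [div_le_iff₀ (by positivity)]
    _ = 2 * a * t := by ring

lemma exp_one_third_le : exp (1 / 3) ≤ 67 / 48 := by
  refine (exp_bound' (by norm_num) (by norm_num) (n := 5) (by norm_num)).trans ?_
  norm_num [Finset.sum_range_succ, Nat.factorial]

lemma exists_even_nat_between_log {n : ℕ} (hn : 3 ≤ n) :
    ∃ k : ℕ, Even k ∧ 6 * log n + log 2 ≤ k ∧ (k : ℝ) ≤ 8 * log n := by
  have hlog2 := log_two_gt_d9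
  have hlog2' := log_two_lt_d9
  have hlog : 0 ≤ log n := log_nonneg (by norm_cast; omega)
  refine ⟨2 * ⌊4 * log n⌋₊, even_two_mul _, ?_, ?_⟩
  · push_cast
    rcases hn.eq_or_lt with rfl | h4
    · have hlog3 : 1 ≤ log 3 := by
        rw [le_log_iff_exp_le (by norm_num)]; linarith [exp_one_lt_d9]
      have hfloor : (4 : ℝ) ≤ ⌊4 * log 3⌋₊ := by
        exact_mod_cast Nat.le_floor (by push_cast; linarith)
      have h3 : 6 * log 3 + log 2 ≤ 11 * log 2 := by
        have := log_le_log (by norm_num) (show (3 : ℝ) ^ 6 * 2 ≤ 2 ^ 11 by norm_num)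
        rwa [log_mul (by norm_num) (by norm_num), log_pow, log_pow] at this
      push_cast at h3 ⊢
      linarith
    · have h4 : 2 * log 2 ≤ log n := calc
        2 * log 2 = log (2 ^ 2) := by rw [log_pow]; norm_num
        _ ≤ log n := log_le_log (by norm_num) (by norm_num; exact_mod_cast h4)
      linarith [Nat.lt_floor_add_one (4 * log n)]
  · push_cast
    linarith [Nat.floor_le (by positivity : 0 ≤ 4 * log n)]

lemma two_mul_pow_mul_exp_le {t m : ℝ} {k : ℕ} (ht : 0 < t) (hk : 6 * t + log 2 ≤ k)
    (hk' : (k : ℝ) ≤ 8 * t) (hm : m ≤ 48 * t) :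
    2 * (k / (exp 1 * (1 / 3) * (24 * t))) ^ k * exp (m * (exp (1 / 3) - 1 - 1 / 3)) ≤
      exp (-(3 * t)) := by
  have hφ : 0 ≤ exp (1 / 3) - 1 - 1 / 3 := by linarith [add_one_le_exp (1 / 3 : ℝ)]
  have hbase : k / (exp 1 * (1 / 3) * (24 * t)) ≤ exp (-1) := by
    rw [exp_neg, div_le_iff₀ (by positivity)]
    field_simp
    linarith
  calc 2 * (k / (exp 1 * (1 / 3) * (24 * t))) ^ k * exp (m * (exp (1 / 3) - 1 - 1 / 3))
      ≤ 2 * exp (-1) ^ k * exp (48 * t * (1 / 16)) := by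
        gcongr
        linarith [exp_one_third_le]
    _ = exp (log 2 - k + 3 * t) := by
        rw [← exp_nat_mul, mul_neg_one, exp_neg, exp_add, exp_sub, exp_log two_pos]; ring_nf
    _ ≤ exp (-(3 * t)) := exp_le_exp.mpr (by linarith)

theorem sampled_neighbors_upper_bound_general {Ω S : Type*} [MeasureSpace Ω]
    [IsProbabilityMeasure (ℙ : Measure Ω)] [Fintype S]
    (n i : ℕ) (hn : 3 ≤ n)
    (ΔA : ℝ) (hΔA : 0 < ΔA)
    (hS : (Fintype.card S : ℝ) ≤ ΔA / 2 ^ (i - 1))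
    (X : S → Ω → ℝ)
    (hmeas : ∀ w, Measurable (X w))
    (hval : ∀ w, ∀ ω, X w ω = 0 ∨ X w ω = 1)
    (hp1 : ∀ w, ℙ {ω | X w ω = 1} = ENNReal.ofReal (24 * 2 ^ i * Real.log n / ΔA))
    (p : ℕ) (hp : 8 * Real.log n ≤ (p : ℝ))
    (hindep : PwiseIndep ℙ p X) :
    ℙ {ω | 72 * Real.log n ≤ ∑ w, X w ω} ≤ ((n : ℝ≥0∞) ^ 3)⁻¹ := by
  set t := log n
  have hn0 : (0 : ℝ) < n := by positivity
  have ht : 0 < t := log_pos (by exact_mod_cast (by omega : 1 < n))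
  set q := 24 * 2 ^ i * t / ΔA
  have hq : ∀ w, ∫ ω, X w ω = q := fun w => by
    rw [integral_eq_measureReal_of_eq_zero_or_one (hmeas w) (hval w), measureReal_def, hp1,
      ENNReal.toReal_ofReal (by positivity)]
  have hmean : Fintype.card S * q ≤ 48 * t :=
    (mul_div_le_of_le_div_two_pow_pred hΔA (by norm_num) ht.le hS).trans_eq (by ring)
  obtain ⟨k, hk, hk6, hk8⟩ := exists_even_nat_between_log hn
  have htail := (hindep.mono (by exact_mod_cast hk8.trans hp)).measureReal_sum_sub_ge_le hmeas
    hval hq hk (a := 24 * t) (L := 1 / 3) (by positivity) (by norm_num)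
  have hsub : {ω | 72 * t ≤ ∑ w, X w ω} ⊆ {ω | 24 * t ≤ ∑ w, (X w ω - q)} := by
    intro ω h
    simp only [Set.mem_ofPred_eq, sum_sub_distrib, sum_const, card_univ, nsmul_eq_mul] at h ⊢
    linarith
  calc ℙ {ω | 72 * t ≤ ∑ w, X w ω} ≤ ℙ {ω | 24 * t ≤ ∑ w, (X w ω - q)} := measure_mono hsub
    _ ≤ ENNReal.ofReal (exp (-(3 * t))) := by
        rw [← ofReal_measureReal]
        exact ENNReal.ofReal_le_ofReal (htail.trans (two_mul_pow_mul_exp_le ht hk6 hk8 hmean))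
    _ = ((n : ℝ≥0∞) ^ 3)⁻¹ := by
        rw [exp_neg, show (3 : ℝ) * t = (3 : ℕ) * t by norm_num, exp_nat_mul, exp_log hn0,
          ENNReal.ofReal_inv_of_pos (by positivity), ENNReal.ofReal_pow hn0.le,
          ENNReal.ofReal_natCast]

/-- **Concentration of the number of sampled neighbors.** Let `n ≥ 3`, `i ≥ 1`, and
`Δ_A > 0` a real with `24·2^i·ln n ≤ Δ_A`. If `S` is a finite index set with
`|S| ≤ Δ_A / 2^(i-1)` and `(X_w)_{w∈S}` are `{0,1}`-valued, `p`-wise independent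
(`p ≥ 8·ln n`) random variables with `P(X_w = 1) = 24·2^i·ln n / Δ_A`, then
`P(Σ_w X_w ≥ 72·ln n) ≤ n⁻³`. -/
theorem sampled_neighbors_upper_bound {Ω S : Type*} [MeasureSpace Ω]
    [IsProbabilityMeasure (ℙ : Measure Ω)] [Fintype S]
    (n i : ℕ) (hn : 3 ≤ n) (hi : 1 ≤ i)
    (ΔA : ℝ) (hΔA : 0 < ΔA) (hprob : 24 * 2 ^ i * Real.log n ≤ ΔA)
    (hS : (Fintype.card S : ℝ) ≤ ΔA / 2 ^ (i - 1))
    (X : S → Ω → ℝ)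
    (hmeas : ∀ w, Measurable (X w))
    (hval : ∀ w, ∀ ω, X w ω = 0 ∨ X w ω = 1)
    (hp1 : ∀ w, ℙ {ω | X w ω = 1} = ENNReal.ofReal (24 * 2 ^ i * Real.log n / ΔA))
    (p : ℕ) (hp : 8 * Real.log n ≤ (p : ℝ))
    (hindep : PwiseIndep ℙ p X) :
    ℙ {ω | 72 * Real.log n ≤ ∑ w, X w ω} ≤ ((n : ℝ≥0∞) ^ 3)⁻¹ :=
  sampled_neighbors_upper_bound_general n i hn ΔA hΔA hS X hmeas hval hp1 p hp hindep
end

section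
/- Let G be a finite simple graph with vertex set V, let B ⊆ V, let R be a finite index set, and let {Ball(v)}_{v∈R} be a partition of B into nonempty sets. Then there exist sets Ball⁺(v) for v ∈ R such that: Ball(v) ⊆ Ball⁺(v) for all v ∈ R; Ball⁺(v) ∖ Ball(v) ⊆ V ∖ B for all v ∈ R; the sets Ball⁺(v) are pairwise disjoint; and, letting 𝓑 be the graph on vertex set R in which distinct v and w are adjacent whenever dist_G(Ball⁺(v), Ball⁺(w)) ≤ 1, every pair of distinct v, w ∈ R satisfies dist_𝓑(v, w) ≤ dist_G(Ball(v), Ball(w)). -/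
open scoped ENNReal

/-!
Extend the assignment of each vertex of `B` to its ball arbitrarily to a map `f : V → R` and
take `Ball⁺(v) := f⁻¹{v}`. Each edge of `G` joins two vertices of the same fibre or of two fibres
at distance at most one, i.e. of equal or `𝓑`-adjacent indices, so `f` maps every `G`-walk to a
`𝓑`-walk that is no longer.
-/

namespace SimpleGraph

variable {V W : Type*} {G : SimpleGraph V} {H : SimpleGraph W}

theorem sdist_le_edist {A B : Set V} {a b : V} (ha : a ∈ A) (hb : b ∈ B) :
    sdist G A B ≤ G.edist a b :=
  iInf₂_le_of_le a ha (iInf₂_le_of_le b hb le_rfl)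

theorem edist_le_one_of_adj_imp (f : V → W) (hf : ∀ a c, G.Adj a c → f a ≠ f c → H.Adj (f a) (f c))
    {a c : V} (hac : G.Adj a c) : H.edist (f a) (f c) ≤ 1 := by
  rw [edist_le_one_iff_adj_or_eq]
  by_cases h : f a = f c
  · exact .inr h
  · exact .inl (hf a c hac h)

theorem edist_comp_le_length (f : V → W) (hf : ∀ a c, G.Adj a c → f a ≠ f c → H.Adj (f a) (f c))
    {a b : V} (p : G.Walk a b) : H.edist (f a) (f b) ≤ p.length := by
  induction p with
  | nil => simp
  | @cons a c b hac p ih =>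
    calc H.edist (f a) (f b) ≤ H.edist (f a) (f c) + H.edist (f c) (f b) := H.edist_triangle
      _ ≤ 1 + p.length := add_le_add (edist_le_one_of_adj_imp f hf hac) ih
      _ = (p.cons hac).length := by rw [Walk.length_cons]; push_cast; ring

theorem edist_comp_le (f : V → W) (hf : ∀ a c, G.Adj a c → f a ≠ f c → H.Adj (f a) (f c))
    (a b : V) : H.edist (f a) (f b) ≤ G.edist a b := by
  by_cases hab : G.Reachable a b
  · obtain ⟨p, hp⟩ := hab.exists_walk_length_eq_edist
    exact hp ▸ edist_comp_le_length f hf p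
  · simp [edist_eq_top_of_not_reachable hab]

theorem edist_le_sdist_fiber (f : V → W)
    (hH : ∀ v w, H.Adj v w ↔ v ≠ w ∧ sdist G (f ⁻¹' {v}) (f ⁻¹' {w}) ≤ 1)
    {A B : Set V} {v w : W} (hA : ∀ a ∈ A, f a = v) (hB : ∀ b ∈ B, f b = w) :
    H.edist v w ≤ sdist G A B := by
  have hf : ∀ a c, G.Adj a c → f a ≠ f c → H.Adj (f a) (f c) := fun a c hac hne =>
    (hH _ _).2 ⟨hne, (sdist_le_edist (A := f ⁻¹' {f a}) (B := f ⁻¹' {f c}) rfl rfl).trans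
      (edist_eq_one_iff_adj.2 hac).le⟩
  refine le_iInf₂ fun a ha => le_iInf₂ fun b hb => ?_
  simpa only [hA a ha, hB b hb] using edist_comp_le f hf a b

end SimpleGraph

theorem exists_eq_on_pairwiseDisjoint {V ι : Type*} [Nonempty ι] {Ball : ι → Set V}
    (hdisj : Pairwise (fun v w : ι => Disjoint (Ball v) (Ball w))) :
    ∃ f : V → ι, ∀ v, ∀ x ∈ Ball v, f x = v := by
  classical
  refine ⟨fun x => if h : ∃ v, x ∈ Ball v then h.choose else Classical.arbitrary ι,
    fun v x hx => ?_⟩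
  have h : ∃ v, x ∈ Ball v := ⟨v, hx⟩
  simp only [dif_pos h]
  by_contra hne
  exact Set.disjoint_left.mp (hdisj hne) h.choose_spec hx

theorem distance_ball_graph_general {V ι : Type*}
    (G : SimpleGraph V) (B : Set V) (Ball : ι → Set V)
    (hdisj : Pairwise (fun v w : ι => Disjoint (Ball v) (Ball w)))
    (hcover : (⋃ v : ι, Ball v) = B) :
    ∃ BallP : ι → Set V,
      (∀ v : ι, Ball v ⊆ BallP v) ∧
      (∀ v : ι, BallP v \ Ball v ⊆ Bᶜ) ∧
      Pairwise (fun v w : ι => Disjoint (BallP v) (BallP w)) ∧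
      ∀ 𝓑 : SimpleGraph ι,
        (∀ v w : ι, 𝓑.Adj v w ↔ v ≠ w ∧ sdist G (BallP v) (BallP w) ≤ (1 : ℕ∞)) →
        ∀ v w : ι, v ≠ w → 𝓑.edist v w ≤ sdist G (Ball v) (Ball w) := by
  cases isEmpty_or_nonempty ι
  · exact ⟨Ball, fun _ => le_rfl, isEmptyElim, isEmptyElim, fun _ _ v => isEmptyElim v⟩
  obtain ⟨f, hf⟩ := exists_eq_on_pairwiseDisjoint hdisj
  refine ⟨fun v => f ⁻¹' {v}, hf, ?_, pairwise_disjoint_fiber f,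
    fun 𝓑 h𝓑 v w _ => SimpleGraph.edist_le_sdist_fiber f h𝓑 (hf v) (hf w)⟩
  rintro v x ⟨hxv, hx⟩ hxB
  rw [← hcover, Set.mem_iUnion] at hxB
  obtain ⟨u, hxu⟩ := hxB
  obtain rfl : u = v := (hf u x hxu).symm.trans hxv
  exact hx hxu

/-- **Forming a distance-`k` ball graph.** Given a partition `{Ball(v)}_{v∈R}` of `B ⊆ V`
into nonempty sets, there exist enlarged pairwise-disjoint sets `Ball⁺(v) ⊇ Ball(v)` adding
only vertices outside `B`, such that in the ball graph `𝓑` on `R` (distinct `v, w` adjacent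
iff `dist_G(Ball⁺(v), Ball⁺(w)) ≤ 1`), any distinct `v, w` satisfy
`dist_𝓑(v, w) ≤ dist_G(Ball(v), Ball(w))`. -/
theorem distance_ball_graph {V ι : Type*} [Fintype V] [Fintype ι]
    (G : SimpleGraph V) (B : Set V) (Ball : ι → Set V)
    (hne : ∀ v : ι, (Ball v).Nonempty)
    (hdisj : Pairwise (fun v w : ι => Disjoint (Ball v) (Ball w)))
    (hcover : (⋃ v : ι, Ball v) = B) :
    ∃ BallP : ι → Set V,
      (∀ v : ι, Ball v ⊆ BallP v) ∧
      (∀ v : ι, BallP v \ Ball v ⊆ Bᶜ) ∧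
      Pairwise (fun v w : ι => Disjoint (BallP v) (BallP w)) ∧
      ∀ 𝓑 : SimpleGraph ι,
        (∀ v w : ι, 𝓑.Adj v w ↔ v ≠ w ∧ sdist G (BallP v) (BallP w) ≤ (1 : ℕ∞)) →
        ∀ v w : ι, v ≠ w → 𝓑.edist v w ≤ sdist G (Ball v) (Ball w) :=
  distance_ball_graph_general G B Ball hdisj hcover
end

section
/- For all positive integers a, b, k there exists a nonempty finite family 𝓗 of functions from {0,1}^a to {0,1}^b with |𝓗| ≤ 2^{k·max(a,b)} that is k-wise independent: for every choice of k distinct inputs x₁, …, x_k ∈ {0,1}^a, if h is chosen uniformly at random from 𝓗, then the random values h(x₁), …, h(x_k) are mutually independent and each is uniformly distributed on {0,1}^b. -/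
/-! Embed `{0,1}^a` into the field `F = GF(2^n)`, `n = max a b`, and hash by
`h_c(x) = τ (c₀ + c₁ x + ⋯ + c_{k-1} x^{k-1})` with `τ : F → 𝔽₂^b` a surjective linear
truncation. For distinct `x₁, …, x_k` the map `c ↦ (h_c(xᵢ))ᵢ` is additive and surjective (the
Vandermonde matrix is invertible), so all its fibres have the same size; since `c ↦ h_c` is
additive as well, its fibres are all cosets of one kernel, and the count passes from the
coefficient vectors to the family of distinct functions `h_c`. -/

open Finset Function

def IsKWiseIndependent {A B : Type*} [Fintype B] [DecidableEq B] (k : ℕ)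
    (𝓗 : Finset (A → B)) : Prop :=
  ∀ x : Fin k → A, Injective x → ∀ y : Fin k → B,
    #{h ∈ 𝓗 | ∀ i, h (x i) = y i} * Fintype.card B ^ k = #𝓗

theorem IsKWiseIndependent.map_equiv {A B B' : Type*} [Fintype B] [DecidableEq B] [Fintype B']
    [DecidableEq B'] {k : ℕ} {𝓗 : Finset (A → B)} (h𝓗 : IsKWiseIndependent k 𝓗) (e : B ≃ B') :
    IsKWiseIndependent k (𝓗.map (Equiv.arrowCongr (.refl A) e).toEmbedding) := by
  intro x hx y
  rw [filter_map, card_map, card_map, ← Fintype.card_congr e, ← h𝓗 x hx (e.symm ∘ y)]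
  congr 2
  refine filter_congr fun h _ => forall_congr' fun i => ?_
  simp [← e.eq_symm_apply]

namespace AddMonoidHom

variable {G N : Type*} [AddGroup G] [Fintype G] [AddMonoid N] [DecidableEq N]

theorem card_filter_image_mul_card_ker (f : G →+ N) (P : N → Prop) [DecidablePred P] :
    #{n ∈ univ.image f | P n} * #{g | f g = 0} = #{g | P (f g)} := by
  have hfiber :
      ∀ n ∈ image f {g | P (f g)}, #{g ∈ {g | P (f g)} | f g = n} = #{g | f g = 0} := by
    intro n hn
    obtain ⟨g₀, hg₀, rfl⟩ := mem_image.1 hn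
    rw [filter_filter, ← card_fiber_eq_of_mem_range f ⟨g₀, rfl⟩ ⟨0, map_zero f⟩]
    congr 1
    refine filter_congr fun g _ => ⟨And.right, fun hg => ⟨?_, hg⟩⟩
    rw [hg]
    exact (mem_filter.1 hg₀).2
  rw [card_eq_sum_card_image f {g | P (f g)}, sum_congr rfl hfiber, sum_const, smul_eq_mul,
    filter_image]

theorem card_fiber_mul_card_of_surjective [Fintype N] (f : G →+ N) (hf : Surjective f) (n : N) :
    #{g | f g = n} * Fintype.card N = Fintype.card G := by
  have hcount := f.card_filter_image_mul_card_ker fun _ => True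
  rw [image_univ_of_surjective hf, filter_true, filter_true, card_univ, card_univ] at hcount
  rw [card_fiber_eq_of_mem_range f (hf n) ⟨0, map_zero f⟩, mul_comm, hcount]

end AddMonoidHom

theorem isKWiseIndependent_image_of_surjective_eval {G A M : Type*} [AddGroup G] [Fintype G]
    [AddMonoid M] [Fintype M] [DecidableEq M] [DecidableEq (A → M)] (k : ℕ) (Φ : G →+ (A → M))
    (hΦ : ∀ x : Fin k → A, Injective x → Surjective fun c i => Φ c (x i)) :
    IsKWiseIndependent k (univ.image Φ) := by
  intro x hx y
  let evalAt : G →+ (Fin k → M) := AddMonoidHom.pi fun i => (Pi.evalAddMonoidHom _ (x i)).comp Φ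
  have hker : 0 < #{c | Φ c = 0} := card_pos.2 ⟨0, by simp⟩
  have hfilter := Φ.card_filter_image_mul_card_ker fun h => ∀ i, h (x i) = y i
  have hall := Φ.card_filter_image_mul_card_ker fun _ => True
  have hfiber := evalAt.card_fiber_mul_card_of_surjective (hΦ x hx) y
  rw [filter_true, filter_true, card_univ] at hall
  apply Nat.eq_of_mul_eq_mul_right hker
  calc #{h ∈ univ.image Φ | ∀ i, h (x i) = y i} * Fintype.card M ^ k * #{c | Φ c = 0}
      = #{c | evalAt c = y} * Fintype.card (Fin k → M) := by
        rw [mul_right_comm, hfilter, Fintype.card_fun, Fintype.card_fin]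
        simp [evalAt, funext_iff]
    _ = #(univ.image Φ) * #{c | Φ c = 0} := by rw [hfiber, hall]

open Matrix in
theorem Matrix.mulVec_vandermonde_surjective {K : Type*} [Field K] {k : ℕ} {v : Fin k → K}
    (hv : Injective v) : Surjective (vandermonde v *ᵥ ·) :=
  mulVec_surjective_iff_isUnit.2 <|
    (isUnit_iff_isUnit_det _).2 (isUnit_iff_ne_zero.2 (det_vandermonde_ne_zero_iff.2 hv))

def polynomialHash {F A M : Type*} [Field F] [AddMonoid M] (k : ℕ) (ι : A → F) (τ : F →+ M) :
    (Fin k → F) →+ (A → M) where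
  toFun c x := τ (∑ j : Fin k, ι x ^ (j : ℕ) * c j)
  map_zero' := by ext; simp
  map_add' c c' := by ext; simp [mul_add, sum_add_distrib]

theorem polynomialHash_eval_surjective {F A M : Type*} [Field F] [AddMonoid M] {k : ℕ}
    {ι : A → F} {τ : F →+ M} (hι : Injective ι) (hτ : Surjective τ) {x : Fin k → A}
    (hx : Injective x) : Surjective fun c i => polynomialHash k ι τ c (x i) := by
  intro t
  choose s hs using fun i => hτ (t i)
  obtain ⟨c, hc⟩ := Matrix.mulVec_vandermonde_surjective (hι.comp hx) s
  refine ⟨c, funext fun i => ?_⟩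
  rw [← hs i, ← hc]
  simp [polynomialHash, Matrix.mulVec, dotProduct]

theorem exists_surjective_linearMap_fin {K V : Type*} [Field K] [AddCommGroup V] [Module K V]
    [FiniteDimensional K V] {b : ℕ} (hb : b ≤ Module.finrank K V) :
    ∃ τ : V →ₗ[K] (Fin b → K), Surjective τ :=
  ⟨(LinearMap.funLeft K K (Fin.castLE hb)).comp (Module.finBasis K V).equivFun.toLinearMap,
    by
      rw [LinearMap.coe_comp]
      exact (LinearMap.funLeft_surjective_of_injective _ _ _ (Fin.castLE_injective hb)).comp
        (LinearEquiv.surjective _)⟩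

theorem exists_kwise_independent_hash_family_general (a b k : ℕ)
    (ha : 0 < a) :
    ∃ 𝓗 : Finset ((Fin a → Bool) → (Fin b → Bool)),
      𝓗.Nonempty ∧
      𝓗.card ≤ 2 ^ (k * max a b) ∧
      ∀ x : Fin k → (Fin a → Bool), Function.Injective x →
        ∀ y : Fin k → (Fin b → Bool),
          (𝓗.filter (fun h => ∀ i : Fin k, h (x i) = y i)).card * (2 ^ b) ^ k
            = 𝓗.card := by
  have hn : max a b ≠ 0 := (ha.trans_le (le_max_left a b)).ne'
  let F := GaloisField 2 (max a b)
  let : Fintype F := Fintype.ofFinite F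
  have hF : Fintype.card F = 2 ^ max a b := by
    rw [← Nat.card_eq_fintype_card, GaloisField.card 2 _ hn]
  obtain ⟨ι⟩ : Nonempty ((Fin a → Bool) ↪ F) := Function.Embedding.nonempty_of_card_le <| by
    simpa [hF] using Nat.pow_le_pow_right two_pos (le_max_left a b)
  obtain ⟨τ, hτ⟩ := exists_surjective_linearMap_fin (K := ZMod 2) (V := F) (b := b) <| by
    rw [GaloisField.finrank 2 hn]; exact le_max_right a b
  obtain ⟨e⟩ : Nonempty ((Fin b → ZMod 2) ≃ (Fin b → Bool)) := Fintype.card_eq.1 (by simp)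
  let Φ := polynomialHash k ι τ.toAddMonoidHom
  have hΦ : IsKWiseIndependent k (univ.image Φ) :=
    isKWiseIndependent_image_of_surjective_eval k Φ fun _ hx =>
      polynomialHash_eval_surjective ι.injective hτ hx
  refine ⟨(univ.image Φ).map (Equiv.arrowCongr (.refl _) e).toEmbedding, by simp, ?_, ?_⟩
  · calc #((univ.image Φ).map _) ≤ Fintype.card (Fin k → F) := by
          rw [card_map]; exact card_image_le
      _ = 2 ^ (k * max a b) := by rw [Fintype.card_fun, hF, Fintype.card_fin, ← pow_mul, mul_comm]
  · intro x hx y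
    simpa using hΦ.map_equiv e x hx y

/-- **Existence of small `k`-wise independent hash families** (Corollary 3.34 in
Vadhan's "Pseudorandomness"). For all positive `a, b, k` there is a nonempty family `𝓗`
of functions `{0,1}^a → {0,1}^b` with `|𝓗| ≤ 2^(k·max(a,b))` that is `k`-wise independent:
for any `k` distinct inputs `x₁, …, x_k` and any outputs `y₁, …, y_k`, the fraction of
`h ∈ 𝓗` with `h(xᵢ) = yᵢ` for all `i` is exactly `(2^b)^(-k)`; equivalently, for `h`
uniform on `𝓗` the values `h(x₁), …, h(x_k)` are mutually independent and each uniform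
on `{0,1}^b`. -/
theorem exists_kwise_independent_hash_family (a b k : ℕ)
    (ha : 0 < a) (hb : 0 < b) (hk : 0 < k) :
    ∃ 𝓗 : Finset ((Fin a → Bool) → (Fin b → Bool)),
      𝓗.Nonempty ∧
      𝓗.card ≤ 2 ^ (k * max a b) ∧
      ∀ x : Fin k → (Fin a → Bool), Function.Injective x →
        ∀ y : Fin k → (Fin b → Bool),
          (𝓗.filter (fun h => ∀ i : Fin k, h (x i) = y i)).card * (2 ^ b) ^ k
            = 𝓗.card :=
  exists_kwise_independent_hash_family_general a b k ha
end
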